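/- arXiv:2212.14847 — 8 statements merged into one kernel-verified Lean document; each statement's English description precedes it below -/
import Mathlib

section
/- Let Φ = (V, 𝒬, 𝒞) be a CSP formula and x : 𝒞 → (0,1) a function such that for every c ∈ 𝒞, ℙ[¬c] ≤ x(c) · ∏_{c' ∈ 𝒞 : vbl(c) ∩ vbl(c') ≠ ∅} (1 − x(c')). Then for any event A ⊆ 𝒬 that is determined by the values of the variables in a subset vbl(A) ⊆ V, one has Pr_μ[A] = ℙ[A | ⋀_{c ∈ 𝒞} c] ≤ ℙ[A] · ∏_{c ∈ 𝒞 : vbl(c) ∩ vbl(A) ≠ ∅} (1 − x(c))^{−1}. -/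
/-!
Write `SatOn S` for the event that every constraint in `S` holds. By strong induction on `S`,
`ℙ[¬c ∧ SatOn S] ≤ x(c) · ℙ[SatOn S]`: dropping from `S` the constraints that share a variable
with `c` makes `¬c` independent of the remaining ones, and the dropped constraints are put back
one at a time, each costing at most a factor `1 - x(c')` by the induction hypothesis. The same
drop-and-restore argument with `A` in place of `¬c` and `S = 𝒞` gives the bound, because
`Pr_μ[A] = ℙ[A ∧ SatOn 𝒞] / ℙ[SatOn 𝒞]`.
-/

open Finset

inductive PVal (α : Type) : Type where
  | val (a : α)
  | star
  | unacc

structure CSP (V : Type) [Fintype V] [DecidableEq V] where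
  Q : V → Type
  fintypeQ : ∀ v, Fintype (Q v)
  decEqQ : ∀ v, DecidableEq (Q v)
  card_two : ∀ v, 2 ≤ Fintype.card (Q v)
  C : Type
  fintypeC : Fintype C
  decEqC : DecidableEq C
  vbl : C → Finset V
  sat : C → ((v : V) → Q v) → Prop
  sat_local : ∀ c x y, (∀ v ∈ vbl c, x v = y v) → sat c x → sat c y

attribute [instance] CSP.fintypeQ CSP.decEqQ CSP.fintypeC CSP.decEqC

namespace CSP

variable {V : Type} [Fintype V] [DecidableEq V] (Φ : CSP V)

/-- The space of (full) assignments `𝒬 = ∏_v Q_v`. -/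
abbrev Assign := (v : V) → Φ.Q v

/-- Partial assignments `𝒬* = ∏_v (Q_v ∪ {⋆, ☆})`. -/
abbrev PAssign := (v : V) → PVal (Φ.Q v)

/-- A full assignment agrees with a partial assignment on all assigned variables. -/
def agrees (σ : Φ.PAssign) (x : Φ.Assign) : Prop :=
  ∀ (v : V) (a : Φ.Q v), σ v = PVal.val a → x v = a

/-- `v ∈ Λ(σ)` : the variable `v` is assigned a value from its domain in `σ`. -/
def assigned (σ : Φ.PAssign) (v : V) : Prop := ∃ a, σ v = PVal.val a

/-- The set of satisfying assignments. -/
def Sat : Set Φ.Assign := {x | ∀ c, Φ.sat c x}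

/-- The event `¬ c` that constraint `c` is violated. -/
def viol (c : Φ.C) : Set Φ.Assign := {x | ¬ Φ.sat c x}

/-- `ℙ[A]` : probability of the event `A` under the uniform product distribution. -/
noncomputable def prob (A : Set Φ.Assign) : ℝ :=
  (A.ncard : ℝ) / (Fintype.card Φ.Assign : ℝ)

/-- `ℙ[A | σ]` : probability of `A` under the uniform product distribution conditioned
on agreeing with `σ` on all assigned variables. -/
noncomputable def condProb (A : Set Φ.Assign) (σ : Φ.PAssign) : ℝ :=
  ((A ∩ {x | Φ.agrees σ x}).ncard : ℝ) / (({x : Φ.Assign | Φ.agrees σ x}).ncard : ℝ)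

/-- `Pr_μ[A]` : probability of `A` under the uniform distribution over satisfying assignments. -/
noncomputable def muProb (A : Set Φ.Assign) : ℝ :=
  ((A ∩ Φ.Sat).ncard : ℝ) / ((Φ.Sat.ncard : ℝ))

/-- the domain size `q`. -/
noncomputable def qmax : ℕ := Finset.univ.sup fun v : V => Fintype.card (Φ.Q v)

/-- the width `k`. -/
noncomputable def width : ℕ := Finset.univ.sup fun c : Φ.C => (Φ.vbl c).card

/-- the dependency degree `Δ`. -/
noncomputable def degree : ℕ :=
  Finset.univ.sup fun c : Φ.C =>
    (Finset.univ.filter fun c' : Φ.C => c' ≠ c ∧ ((Φ.vbl c) ∩ (Φ.vbl c')).Nonempty).card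

end CSP

theorem Set.ncard_inter_mul_natCard_eq_of_dependsOn {ι : Type*} {α : ι → Type*}
    {A B : Set (∀ i, α i)} {s t : Set ι} (hA : DependsOn (· ∈ A) s) (hB : DependsOn (· ∈ B) t)
    (hst : Disjoint s t) :
    (A ∩ B).ncard * Nat.card (∀ i, α i) = A.ncard * B.ncard := by
  classical
  let e := Equiv.piEquivPiSubtypeProd (· ∈ s) α
  set A₁ := (fun y => (e y).1) '' A
  set B₂ := (fun y => (e y).2) '' B
  have memA : ∀ y, y ∈ A ↔ (e y).1 ∈ A₁ := fun y =>
    ⟨fun hy => ⟨y, hy, rfl⟩, fun ⟨z, hz, hzy⟩ =>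
      Eq.mp (hA fun i hi => congrFun hzy ⟨i, hi⟩) hz⟩
  have memB : ∀ y, y ∈ B ↔ (e y).2 ∈ B₂ := fun y =>
    ⟨fun hy => ⟨y, hy, rfl⟩, fun ⟨z, hz, hzy⟩ =>
      Eq.mp (hB fun i hi => congrFun hzy ⟨i, hst.notMem_of_mem_right hi⟩) hz⟩
  have hA' : A = e ⁻¹' (A₁ ×ˢ univ) := by ext y; simp [memA y]
  have hB' : B = e ⁻¹' (univ ×ˢ B₂) := by ext y; simp [memB y]
  have hAB : A ∩ B = e ⁻¹' (A₁ ×ˢ B₂) := by ext y; simp [memA y, memB y]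
  have ncard_preimage : ∀ S, (e ⁻¹' S).ncard = S.ncard := fun S =>
    ncard_preimage_of_injective_subset_range e.injective (by simp)
  rw [hAB, hA', hB', ncard_preimage, ncard_preimage, ncard_preimage, ncard_prod, ncard_prod,
    ncard_prod, ncard_univ, ncard_univ, Nat.card_congr e, Nat.card_prod]
  ring

theorem Finset.prod_one_sub_pos {ι : Type*} {x : ι → ℝ} (hx : ∀ i, x i ∈ Set.Ico 0 1)
    (s : Finset ι) : 0 < ∏ i ∈ s, (1 - x i) :=
  Finset.prod_pos fun i _ => sub_pos.mpr (hx i).2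

theorem Finset.prod_one_sub_anti {ι : Type*} {x : ι → ℝ} (hx : ∀ i, x i ∈ Set.Ico 0 1) :
    Antitone fun s : Finset ι => ∏ i ∈ s, (1 - x i) :=
  Finset.prod_anti_set_of_le_one (fun i => sub_nonneg.mpr (hx i).2.le)
    (fun i => sub_le_self _ (hx i).1)

namespace CSP

variable {V : Type} [Fintype V] [DecidableEq V] {Φ : CSP V} {x : Φ.C → ℝ}

theorem card_assign_pos : 0 < Fintype.card Φ.Assign :=
  have : ∀ v, Nonempty (Φ.Q v) := fun v => Fintype.card_pos_iff.mp (by linarith [Φ.card_two v])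
  Fintype.card_pos

theorem prob_nonneg (A : Set Φ.Assign) : 0 ≤ Φ.prob A := by
  unfold prob; positivity

theorem prob_mono {A B : Set Φ.Assign} (hAB : A ⊆ B) : Φ.prob A ≤ Φ.prob B := by
  unfold prob; gcongr; exact B.toFinite

theorem prob_univ : Φ.prob Set.univ = 1 := by
  rw [prob, Set.ncard_univ, Nat.card_eq_fintype_card, div_self]
  exact_mod_cast card_assign_pos.ne'

theorem prob_inter_eq_mul_of_dependsOn {A B : Set Φ.Assign} {s t : Set V}
    (hA : DependsOn (· ∈ A) s) (hB : DependsOn (· ∈ B) t) (hst : Disjoint s t) :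
    Φ.prob (A ∩ B) = Φ.prob A * Φ.prob B := by
  have hN : (0 : ℝ) < Fintype.card Φ.Assign := by exact_mod_cast card_assign_pos
  have h := Set.ncard_inter_mul_natCard_eq_of_dependsOn hA hB hst
  rw [Nat.card_eq_fintype_card] at h
  unfold prob
  field_simp
  exact_mod_cast h

theorem muProb_eq_prob_div (A : Set Φ.Assign) :
    Φ.muProb A = Φ.prob (A ∩ Φ.Sat) / Φ.prob Φ.Sat := by
  have hN : (Fintype.card Φ.Assign : ℝ) ≠ 0 := by exact_mod_cast card_assign_pos.ne'
  rw [muProb, prob, prob, div_div_div_cancel_right₀ hN]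

variable (Φ) in
def SatOn (S : Finset Φ.C) : Set Φ.Assign := {y | ∀ c ∈ S, Φ.sat c y}

@[simp] theorem satOn_empty : Φ.SatOn ∅ = Set.univ := by
  ext y; simp [SatOn]

theorem satOn_univ : Φ.SatOn Finset.univ = Φ.Sat := by
  ext y; simp [SatOn, Sat]

theorem satOn_anti : Antitone Φ.SatOn := fun _ _ hST _ hy c hc => hy c (hST hc)

theorem dependsOn_satOn (S : Finset Φ.C) :
    DependsOn (· ∈ Φ.SatOn S) ↑(S.biUnion Φ.vbl) := by
  intro a b hab
  refine propext ⟨fun ha c hc => Φ.sat_local c a b ?_ (ha c hc),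
    fun hb c hc => Φ.sat_local c b a ?_ (hb c hc)⟩ <;>
  exact fun v hv => by simp [hab v (by simpa using ⟨c, hc, hv⟩)]

theorem dependsOn_viol (c : Φ.C) : DependsOn (· ∈ Φ.viol c) ↑(Φ.vbl c) := by
  intro a b hab
  exact propext (not_congr ⟨Φ.sat_local c a b hab, Φ.sat_local c b a fun v hv => (hab v hv).symm⟩)

theorem prob_satOn_eq_add (c : Φ.C) (S : Finset Φ.C) :
    Φ.prob (Φ.SatOn S) = Φ.prob (Φ.SatOn (insert c S)) + Φ.prob (Φ.viol c ∩ Φ.SatOn S) := by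
  have hsplit : Φ.SatOn S = Φ.SatOn (insert c S) ∪ (Φ.viol c ∩ Φ.SatOn S) := by
    ext y; by_cases hy : Φ.sat c y <;> simp [SatOn, viol, hy]
  have hdisj : Disjoint (Φ.SatOn (insert c S)) (Φ.viol c ∩ Φ.SatOn S) :=
    Set.disjoint_left.mpr fun y hy hy' => hy'.1 (hy c (Finset.mem_insert_self c S))
  conv_lhs => rw [prob, hsplit, Set.ncard_union_eq hdisj]
  unfold prob; push_cast; ring

theorem prod_one_sub_mul_prob_satOn_le (hx : ∀ c, x c ∈ Set.Ico 0 1) (T S : Finset Φ.C)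
    (hcore : ∀ U ⊂ T ∪ S, ∀ c, Φ.prob (Φ.viol c ∩ Φ.SatOn U) ≤ x c * Φ.prob (Φ.SatOn U)) :
    (∏ c ∈ T, (1 - x c)) * Φ.prob (Φ.SatOn S) ≤ Φ.prob (Φ.SatOn (T ∪ S)) := by
  induction T using Finset.induction_on with
  | empty => simp
  | insert c T hcT ih =>
    have hsub : T ∪ S ⊆ insert c T ∪ S :=
      Finset.union_subset_union_left (Finset.subset_insert c T)
    have ih := ih fun U hU => hcore U (hU.trans_subset hsub)
    have hT : 0 ≤ ∏ c ∈ T, (1 - x c) := Finset.prod_nonneg fun c _ => sub_nonneg.mpr (hx c).2.le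
    rw [Finset.prod_insert hcT, mul_assoc]
    by_cases hcS : c ∈ S
    · have heq : insert c T ∪ S = T ∪ S := by
        rw [Finset.insert_union, Finset.insert_eq_of_mem (Finset.mem_union_right T hcS)]
      rw [heq]
      exact (mul_le_of_le_one_left (mul_nonneg hT (prob_nonneg _)) (sub_le_self _ (hx c).1)).trans
        ih
    · rw [Finset.insert_union] at hcore ⊢
      have hcore_c := hcore (T ∪ S) (Finset.ssubset_insert (by simp [hcT, hcS])) c
      calc (1 - x c) * ((∏ c ∈ T, (1 - x c)) * Φ.prob (Φ.SatOn S))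
          ≤ (1 - x c) * Φ.prob (Φ.SatOn (T ∪ S)) :=
            mul_le_mul_of_nonneg_left ih (sub_nonneg.mpr (hx c).2.le)
        _ ≤ Φ.prob (Φ.SatOn (insert c (T ∪ S))) := by
            linarith [prob_satOn_eq_add c (T ∪ S)]

theorem prob_inter_satOn_mul_prod_le (hx : ∀ c, x c ∈ Set.Ico 0 1) {A : Set Φ.Assign}
    {W : Finset V} (hA : DependsOn (· ∈ A) ↑W) (S : Finset Φ.C)
    (hcore : ∀ U ⊂ S, ∀ c, Φ.prob (Φ.viol c ∩ Φ.SatOn U) ≤ x c * Φ.prob (Φ.SatOn U)) :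
    Φ.prob (A ∩ Φ.SatOn S) * ∏ c ∈ S.filter (fun c => (Φ.vbl c ∩ W).Nonempty), (1 - x c) ≤
      Φ.prob A * Φ.prob (Φ.SatOn S) := by
  set S₁ := S.filter (fun c => (Φ.vbl c ∩ W).Nonempty)
  set S₂ := S.filter (fun c => ¬ (Φ.vbl c ∩ W).Nonempty)
  have hS : S₁ ∪ S₂ = S := Finset.filter_union_filter_not_eq _ _
  have hdisj : Disjoint (↑W : Set V) ↑(S₂.biUnion Φ.vbl) := by
    rw [Finset.disjoint_coe, Finset.disjoint_biUnion_right]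
    intro c hc
    simpa [Finset.disjoint_iff_inter_eq_empty, Finset.inter_comm,
      Finset.not_nonempty_iff_eq_empty] using (Finset.mem_filter.mp hc).2
  have hchain : (∏ c ∈ S₁, (1 - x c)) * Φ.prob (Φ.SatOn S₂) ≤ Φ.prob (Φ.SatOn S) := by
    simpa only [hS] using prod_one_sub_mul_prob_satOn_le hx S₁ S₂ (hS ▸ hcore)
  calc Φ.prob (A ∩ Φ.SatOn S) * ∏ c ∈ S₁, (1 - x c)
      ≤ Φ.prob (A ∩ Φ.SatOn S₂) * ∏ c ∈ S₁, (1 - x c) :=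
        mul_le_mul_of_nonneg_right
          (prob_mono (Set.inter_subset_inter_right _ (satOn_anti (Finset.filter_subset _ S))))
          (Finset.prod_one_sub_pos hx S₁).le
    _ = Φ.prob A * ((∏ c ∈ S₁, (1 - x c)) * Φ.prob (Φ.SatOn S₂)) := by
        rw [prob_inter_eq_mul_of_dependsOn hA (dependsOn_satOn S₂) hdisj]; ring
    _ ≤ Φ.prob A * Φ.prob (Φ.SatOn S) := mul_le_mul_of_nonneg_left hchain (prob_nonneg A)

theorem prob_viol_inter_satOn_le (hx : ∀ c, x c ∈ Set.Ico 0 1)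
    (h : ∀ c, Φ.prob (Φ.viol c) ≤
      x c * ∏ c' ∈ Finset.univ.filter (fun c' => (Φ.vbl c ∩ Φ.vbl c').Nonempty), (1 - x c'))
    (S : Finset Φ.C) (c : Φ.C) :
    Φ.prob (Φ.viol c ∩ Φ.SatOn S) ≤ x c * Φ.prob (Φ.SatOn S) := by
  induction S using Finset.strongInduction generalizing c with
  | H S ih =>
    set S₁ := S.filter (fun c' => (Φ.vbl c' ∩ Φ.vbl c).Nonempty)
    have hS₁ : S₁ ⊆ Finset.univ.filter (fun c' => (Φ.vbl c ∩ Φ.vbl c').Nonempty) :=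
      fun c' hc' => by simpa [Finset.inter_comm] using (Finset.mem_filter.mp hc').2
    refine le_of_mul_le_mul_right ?_ (Finset.prod_one_sub_pos hx S₁)
    calc Φ.prob (Φ.viol c ∩ Φ.SatOn S) * ∏ c' ∈ S₁, (1 - x c')
        ≤ Φ.prob (Φ.viol c) * Φ.prob (Φ.SatOn S) :=
          prob_inter_satOn_mul_prod_le hx (dependsOn_viol c) S ih
      _ ≤ x c * (∏ c' ∈ S₁, (1 - x c')) * Φ.prob (Φ.SatOn S) := by
          refine mul_le_mul_of_nonneg_right ((h c).trans ?_) (prob_nonneg _)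
          exact mul_le_mul_of_nonneg_left (Finset.prod_one_sub_anti hx hS₁) (hx c).1
      _ = x c * Φ.prob (Φ.SatOn S) * ∏ c' ∈ S₁, (1 - x c') := by ring

theorem prob_satOn_pos (hx : ∀ c, x c ∈ Set.Ico 0 1)
    (h : ∀ c, Φ.prob (Φ.viol c) ≤
      x c * ∏ c' ∈ Finset.univ.filter (fun c' => (Φ.vbl c ∩ Φ.vbl c').Nonempty), (1 - x c'))
    (S : Finset Φ.C) : 0 < Φ.prob (Φ.SatOn S) := by
  have hchain :=
    prod_one_sub_mul_prob_satOn_le hx S ∅ fun U _ c => prob_viol_inter_satOn_le hx h U c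
  rw [Finset.union_empty, satOn_empty, prob_univ, mul_one] at hchain
  exact (Finset.prod_one_sub_pos hx S).trans_le hchain

end CSP

/-- **Haeupler–Saha–Srinivasan bound.**
Under the Lovász Local Lemma condition, for any event `A` determined by the variables of
`vblA`, one has `Pr_μ[A] = ℙ[A | ⋀_c c] ≤ ℙ[A] · ∏_{c : vbl(c) ∩ vbl(A) ≠ ∅} (1 − x(c))⁻¹`. -/
theorem statement1 {V : Type} [Fintype V] [DecidableEq V] (Φ : CSP V)
    (x : Φ.C → ℝ) (hx : ∀ c, x c ∈ Set.Ioo (0 : ℝ) 1)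
    (h : ∀ c, Φ.prob (Φ.viol c) ≤
      x c * ∏ c' ∈ Finset.univ.filter
        (fun c' : Φ.C => ((Φ.vbl c) ∩ (Φ.vbl c')).Nonempty), (1 - x c'))
    (A : Set Φ.Assign) (vblA : Finset V)
    (hA : ∀ a b : Φ.Assign, (∀ v ∈ vblA, a v = b v) → a ∈ A → b ∈ A) :
    Φ.muProb A = Φ.prob (A ∩ Φ.Sat) / Φ.prob Φ.Sat ∧
    Φ.muProb A ≤ Φ.prob A *
      ∏ c ∈ Finset.univ.filter (fun c : Φ.C => ((Φ.vbl c) ∩ vblA).Nonempty), (1 - x c)⁻¹ := by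
  have hx' : ∀ c, x c ∈ Set.Ico 0 1 := fun c => Set.Ioo_subset_Ico_self (hx c)
  have hSat : 0 < Φ.prob Φ.Sat := CSP.satOn_univ (Φ := Φ) ▸ CSP.prob_satOn_pos hx' h _
  have hA' : DependsOn (· ∈ A) ↑vblA := fun a b hab =>
    propext ⟨hA a b hab, hA b a fun v hv => (hab v hv).symm⟩
  have key := CSP.prob_inter_satOn_mul_prod_le hx' hA' Finset.univ
    fun U _ c => CSP.prob_viol_inter_satOn_le hx' h U c
  rw [CSP.satOn_univ] at key
  refine ⟨CSP.muProb_eq_prob_div A, ?_⟩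
  rw [CSP.muProb_eq_prob_div, Finset.prod_inv_distrib, ← div_eq_mul_inv,
    div_le_div_iff₀ hSat (Finset.prod_one_sub_pos hx' _)]
  exact key
end

section
/- Let Φ = (V, 𝒬, 𝒞) be a CSP formula with variables enumerated v_1, …, v_n, and let p' ∈ (0,1) satisfy p < p'. Let X_0 = ☆^V be the everywhere-unaccessed partial assignment, and let X_1, …, X_n be partial assignments such that for every i ∈ {1,…,n}, either X_i = X_{i−1}, or v_i ∉ Λ⁺(X_{i−1}), X_i = (X_{i−1})_{v_i ← a_i} for some a_i ∈ Q_{v_i}, and ℙ[¬c | X_{i−1}] ≤ p' holds for every constraint c ∈ 𝒞 with v_i ∈ vbl(c). Then ℙ[¬c | X_i] ≤ p'·q for every c ∈ 𝒞 and every 0 ≤ i ≤ n. -/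
open Finset

/-!
Assigning a value to an unaccessed variable `v` cuts the conditioning set down to one of its
`q_v` equally large fibres over the values of `v`. Hence it multiplies the conditional
probability of any event by at most `q_v ≤ q`, and leaves it unchanged for an event that does
not depend on `v`. So the bound `ℙ[¬c | X_i]` can only grow at a step assigning a variable of
`c`, and such a step is only taken while it is at most `p'`.
-/

section FiberCount

variable {ι : Type*} [DecidableEq ι] {β : ι → Type*}

theorem Set.ncard_eq_card_mul_ncard_inter_fiber (T : Set ((i : ι) → β i)) (i : ι)
    [Fintype (β i)] (hT : ∀ x ∈ T, ∀ b : β i, Function.update x i b ∈ T) (a : β i) :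
    T.ncard = Fintype.card (β i) * (T ∩ {x | x i = a}).ncard := by
  let e : T ≃ β i × ↥(T ∩ {x | x i = a}) :=
    { toFun := fun x => (x.1 i, ⟨Function.update x.1 i a, hT _ x.2 _, by simp⟩)
      invFun := fun y => ⟨Function.update y.2.1 i y.1, hT _ y.2.2.1 _⟩
      left_inv := fun x => by simp
      right_inv := by
        rintro ⟨b, y, hy, rfl⟩
        simp }
  rw [← Nat.card_coe_set_eq, ← Nat.card_coe_set_eq, Nat.card_congr e, Nat.card_prod,
    Nat.card_eq_fintype_card]

end FiberCount

namespace CSP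

variable {V : Type} [Fintype V] [DecidableEq V] {Φ : CSP V}

theorem card_Q_pos (v : V) : 0 < Fintype.card (Φ.Q v) :=
  lt_of_lt_of_le two_pos (Φ.card_two v)

theorem card_Q_le_qmax (v : V) : Fintype.card (Φ.Q v) ≤ Φ.qmax :=
  Finset.le_sup (f := fun w => Fintype.card (Φ.Q w)) (Finset.mem_univ v)

theorem agrees_update_mem {σ : Φ.PAssign} {v : V} (hσ : σ v = PVal.unacc) {x : Φ.Assign}
    (hx : Φ.agrees σ x) (b : Φ.Q v) : Φ.agrees σ (Function.update x v b) := by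
  intro w c hw
  rcases eq_or_ne w v with rfl | hne
  · simp [hσ] at hw
  · rw [Function.update_of_ne hne]
    exact hx w c hw

theorem setOf_agrees_update {σ : Φ.PAssign} {v : V} (hσ : σ v = PVal.unacc) (a : Φ.Q v) :
    {x | Φ.agrees (Function.update σ v (PVal.val a)) x} =
      {x | Φ.agrees σ x} ∩ {x | x v = a} := by
  ext x
  simp only [Set.mem_inter_iff, Set.mem_ofPred, agrees]
  constructor
  · intro h
    refine ⟨fun w b hw => h w b ?_, h v a (by simp)⟩
    rcases eq_or_ne w v with rfl | hne
    · simp [hσ] at hw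
    · rwa [Function.update_of_ne hne]
  · rintro ⟨h, rfl⟩ w b hw
    rcases eq_or_ne w v with rfl | hne
    · simpa using hw
    · exact h w b (by rwa [Function.update_of_ne hne] at hw)

theorem viol_update_mem {c : Φ.C} {v : V} (hv : v ∉ Φ.vbl c) {x : Φ.Assign}
    (hx : x ∈ Φ.viol c) (b : Φ.Q v) : Function.update x v b ∈ Φ.viol c := fun hsat =>
  hx (Φ.sat_local c _ x (fun w hw => Function.update_of_ne (by rintro rfl; exact hv hw) _ _) hsat)

theorem condProb_nonneg (A : Set Φ.Assign) (σ : Φ.PAssign) : 0 ≤ Φ.condProb A σ := by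
  unfold condProb
  positivity

theorem condProb_unacc (A : Set Φ.Assign) :
    Φ.condProb A (fun _ => PVal.unacc) = Φ.prob A := by
  have : {x : Φ.Assign | Φ.agrees (fun _ => PVal.unacc) x} = Set.univ := by
    ext x
    simp [agrees]
  simp [condProb, prob, this, Set.ncard_univ, Nat.card_eq_fintype_card]

theorem condProb_update {σ : Φ.PAssign} {v : V} (hσ : σ v = PVal.unacc) (A : Set Φ.Assign)
    (a : Φ.Q v) :
    Φ.condProb A (Function.update σ v (PVal.val a)) =
      Fintype.card (Φ.Q v) * ((A ∩ {x | Φ.agrees σ x} ∩ {x | x v = a}).ncard : ℝ) /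
        ({x | Φ.agrees σ x}.ncard : ℝ) := by
  have hq : (Fintype.card (Φ.Q v) : ℝ) ≠ 0 := by exact_mod_cast (card_Q_pos v).ne'
  rw [condProb, setOf_agrees_update hσ, ← Set.inter_assoc,
    Set.ncard_eq_card_mul_ncard_inter_fiber {x | Φ.agrees σ x} v
      (fun x hx => agrees_update_mem hσ hx) a]
  push_cast
  rw [mul_div_mul_left _ _ hq]

theorem condProb_update_le {σ : Φ.PAssign} {v : V} (hσ : σ v = PVal.unacc) (A : Set Φ.Assign)
    (a : Φ.Q v) :
    Φ.condProb A (Function.update σ v (PVal.val a)) ≤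
      Fintype.card (Φ.Q v) * Φ.condProb A σ := by
  have hsub : ((A ∩ {x | Φ.agrees σ x} ∩ {x | x v = a}).ncard : ℝ) ≤
      (A ∩ {x | Φ.agrees σ x}).ncard := by
    exact_mod_cast Set.ncard_le_ncard Set.inter_subset_left (Set.toFinite _)
  rw [condProb_update hσ, condProb, mul_div_assoc]
  exact mul_le_mul_of_nonneg_left (div_le_div_of_nonneg_right hsub (Nat.cast_nonneg _))
    (Nat.cast_nonneg _)

theorem condProb_update_of_forall_update_mem {σ : Φ.PAssign} {v : V} (hσ : σ v = PVal.unacc)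
    {A : Set Φ.Assign} (hA : ∀ x ∈ A, ∀ b : Φ.Q v, Function.update x v b ∈ A) (a : Φ.Q v) :
    Φ.condProb A (Function.update σ v (PVal.val a)) = Φ.condProb A σ := by
  rw [condProb_update hσ, condProb,
    Set.ncard_eq_card_mul_ncard_inter_fiber (A ∩ {x | Φ.agrees σ x}) v
      (fun x hx b => ⟨hA x hx.1 b, agrees_update_mem hσ hx.2 b⟩) a]
  push_cast
  rfl

/-- With no variables there is a single assignment, so an event of probability below `1` is
empty; this covers `q = 0`, the value of the empty supremum. -/
theorem prob_le_mul_qmax {A : Set Φ.Assign} {p' : ℝ} (hp'0 : 0 ≤ p') (hp'1 : p' ≤ 1)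
    (hA : Φ.prob A < p') : Φ.prob A ≤ p' * Φ.qmax := by
  cases isEmpty_or_nonempty V with
  | inr hV =>
    obtain ⟨v⟩ := hV
    have hq : (1 : ℝ) ≤ Φ.qmax := by exact_mod_cast (card_Q_pos v).trans_le (card_Q_le_qmax v)
    nlinarith
  | inl hV =>
    have hA_empty : A = ∅ := by
      by_contra hne
      have : A = Set.univ := (Set.nonempty_iff_ne_empty.2 hne).eq_univ
      simp [this, prob, Set.ncard_univ, Nat.card_eq_fintype_card] at hA
      linarith
    simp [hA_empty, prob, mul_nonneg hp'0]

theorem condProb_viol_update_le {σ : Φ.PAssign} {v : V} (hσ : σ v = PVal.unacc) (a : Φ.Q v)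
    {p' : ℝ} (hσv : ∀ c, v ∈ Φ.vbl c → Φ.condProb (Φ.viol c) σ ≤ p')
    {c : Φ.C} (hc : Φ.condProb (Φ.viol c) σ ≤ p' * Φ.qmax) :
    Φ.condProb (Φ.viol c) (Function.update σ v (PVal.val a)) ≤ p' * Φ.qmax := by
  by_cases hv : v ∈ Φ.vbl c
  · calc Φ.condProb (Φ.viol c) (Function.update σ v (PVal.val a))
        ≤ Fintype.card (Φ.Q v) * Φ.condProb (Φ.viol c) σ := condProb_update_le hσ _ a
      _ ≤ Φ.qmax * p' := by
        gcongr
        · exact condProb_nonneg _ _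
        · exact_mod_cast card_Q_le_qmax v
        · exact hσv c hv
      _ = p' * Φ.qmax := mul_comm _ _
  · rwa [condProb_update_of_forall_update_mem hσ (fun x hx => viol_update_mem hv hx)]

end CSP

theorem statement4_general {V : Type} [Fintype V] [DecidableEq V] (Φ : CSP V)
    (p' : ℝ) (hp' : p' ∈ Set.Ioo (0 : ℝ) 1)
    (hp : ∀ c, Φ.prob (Φ.viol c) < p')
    (n : ℕ) (v : Fin n → V)
    (X : ℕ → Φ.PAssign) (h0 : X 0 = fun _ => PVal.unacc)
    (hstep : ∀ i : Fin n,
      X (i + 1) = X i ∨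
      ((X i) (v i) = PVal.unacc ∧
        (∃ a : Φ.Q (v i), X (i + 1) = Function.update (X i) (v i) (PVal.val a)) ∧
        ∀ c, v i ∈ Φ.vbl c → Φ.condProb (Φ.viol c) (X i) ≤ p')) :
    ∀ c, ∀ i ≤ n, Φ.condProb (Φ.viol c) (X i) ≤ p' * (Φ.qmax : ℝ) := by
  intro c i hi
  induction i with
  | zero =>
    rw [h0, CSP.condProb_unacc]
    exact CSP.prob_le_mul_qmax hp'.1.le hp'.2.le (hp c)
  | succ i ih =>
    have ih := ih (by omega)
    rcases hstep ⟨i, hi⟩ with hkeep | ⟨hunacc, ⟨a, hassign⟩, hsafe⟩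
    · rwa [show X (i + 1) = X i from hkeep]
    · rw [show X (i + 1) = _ from hassign]
      exact CSP.condProb_viol_update_le hunacc a hsafe ih

/-- **Invariant of the main sampling loop.**
Starting from the everywhere-unaccessed partial assignment and assigning, step by step,
a value to a variable `v_i` only when all constraints containing `v_i` currently have
conditional violation probability at most `p'`, every constraint keeps conditional
violation probability at most `p'·q` throughout. -/
theorem statement4 {V : Type} [Fintype V] [DecidableEq V] (Φ : CSP V)
    (p' : ℝ) (hp' : p' ∈ Set.Ioo (0 : ℝ) 1)
    (hp : ∀ c, Φ.prob (Φ.viol c) < p')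
    (n : ℕ) (v : Fin n → V) (hv : Function.Bijective v)
    (X : ℕ → Φ.PAssign) (h0 : X 0 = fun _ => PVal.unacc)
    (hstep : ∀ i : Fin n,
      X (i + 1) = X i ∨
      ((X i) (v i) = PVal.unacc ∧
        (∃ a : Φ.Q (v i), X (i + 1) = Function.update (X i) (v i) (PVal.val a)) ∧
        ∀ c, v i ∈ Φ.vbl c → Φ.condProb (Φ.viol c) (X i) ≤ p')) :
    ∀ c, ∀ i ≤ n, Φ.condProb (Φ.viol c) (X i) ≤ p' * (Φ.qmax : ℝ) :=
  statement4_general Φ p' hp' hp n v X h0 hstep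
end

section
/- Let Φ = (V, 𝒬, 𝒞) be a CSP formula and p' ∈ (0,1) with e·p'·q·(Δ+1) < 1. Let σ be a feasible partial assignment with ℙ[¬c | σ] ≤ p'·q for every c ∈ 𝒞, and let v ∈ V with v ∉ Λ(σ). Then min_{a ∈ Q_v} μ^σ_v(a) ≥ 1/q_v − ((1 − e·p'·q)^{−(Δ+1)} − 1). In particular, with η := (1 − e·p'·q)^{−(Δ+1)} − 1, ζ := (8·e·q·k·Δ³)^{−1} and θ_v := 1/q_v − η − ζ, one has min_{a ∈ Q_v} μ^σ_v(a) ≥ θ_v + ζ. -/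
open Finset

/-- `μ^σ_v(a)` : the marginal probability at `v` of the value `a`, under the uniform
distribution over satisfying assignments conditioned on agreeing with `σ` on `Λ(σ)`. -/
noncomputable def CSP.margCond {V : Type} [Fintype V] [DecidableEq V] (Φ : CSP V)
    (σ : Φ.PAssign) (v : V) (a : Φ.Q v) : ℝ :=
  (({x ∈ Φ.Sat | Φ.agrees σ x ∧ x v = a}).ncard : ℝ) /
    (({x ∈ Φ.Sat | Φ.agrees σ x}).ncard : ℝ)


section AuxCount

lemma aux_card_iff {α : Type*} {p q : α → Prop} (h : ∀ x, p x ↔ q x) :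
    Nat.card {x // p x} = Nat.card {x // q x} :=
  Nat.card_congr (Equiv.subtypeEquivRight h)

lemma aux_card_split {α : Type*} [Finite α] (p q : α → Prop) :
    Nat.card {x // p x ∧ q x} + Nat.card {x // p x ∧ ¬ q x} = Nat.card {x // p x} := by
  classical
  have := Fintype.ofFinite α
  simp only [Nat.card_eq_fintype_card, Fintype.card_subtype]
  rw [← Finset.filter_filter, ← Finset.filter_filter]
  exact Finset.card_filter_add_card_filter_not _

lemma aux_card_mono {α : Type*} [Finite α] {p q : α → Prop} (h : ∀ x, p x → q x) :
    Nat.card {x // p x} ≤ Nat.card {x // q x} := by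
  apply Nat.card_le_card_of_injective (fun a => ⟨a.1, h a.1 a.2⟩)
  intro a b hab
  exact Subtype.ext (by simpa using congrArg Subtype.val hab)

lemma aux_card_fiber_sum {α β : Type*} [Finite α] [Fintype β] [DecidableEq β]
    (p : α → Prop) (f : α → β) :
    ∑ b : β, Nat.card {x // p x ∧ f x = b} = Nat.card {x // p x} := by
  classical
  have := Fintype.ofFinite α
  simp only [Nat.card_eq_fintype_card, Fintype.card_subtype]
  rw [Finset.card_eq_sum_card_fiberwise (f := f) (t := Finset.univ) (fun x _ => Finset.mem_univ _)]
  apply Finset.sum_congr rfl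
  intro b _
  rw [← Finset.filter_filter]

end AuxCount

namespace CSP

variable {V : Type} [Fintype V] [DecidableEq V] (Φ : CSP V)

lemma nonemptyQ (v : V) : Nonempty (Φ.Q v) := by
  have := Φ.card_two v
  exact Fintype.card_pos_iff.mp (by omega)

lemma indepCount (S : Set V) (P R : Φ.Assign → Prop)
    (hP : ∀ x y : Φ.Assign, (∀ v ∈ S, x v = y v) → (P x ↔ P y))
    (hR : ∀ x y : Φ.Assign, (∀ v, v ∉ S → x v = y v) → (R x ↔ R y)) :
    Nat.card {x : Φ.Assign // P x ∧ R x} * Nat.card Φ.Assign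
      = Nat.card {x : Φ.Assign // P x} * Nat.card {x : Φ.Assign // R x} := by
  classical
  haveI : ∀ v, Nonempty (Φ.Q v) := Φ.nonemptyQ
  let e := Equiv.piEquivPiSubtypeProd (fun v => v ∈ S) Φ.Q
  have s₀ : (i : { x : V // x ∈ S }) → Φ.Q i.1 := fun _ => Classical.arbitrary _
  have t₀ : (i : { x : V // x ∉ S }) → Φ.Q i.1 := fun _ => Classical.arbitrary _
  let P₁ : ((i : { x : V // x ∈ S }) → Φ.Q i.1) → Prop := fun s => P (e.symm (s, t₀))
  let R₂ : ((i : { x : V // x ∉ S }) → Φ.Q i.1) → Prop := fun t => R (e.symm (s₀, t))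
  have hsymm : ∀ s t (v : V),
      e.symm (s, t) v = if h : v ∈ S then s ⟨v, h⟩ else t ⟨v, h⟩ := fun s t v =>
    Equiv.piEquivPiSubtypeProd_symm_apply (fun v => v ∈ S) Φ.Q (s, t) v
  have hPfac : ∀ s t, P (e.symm (s, t)) ↔ P₁ s := by
    intro s t
    apply hP
    intro v hv
    rw [hsymm, hsymm, dif_pos hv, dif_pos hv]
  have hRfac : ∀ s t, R (e.symm (s, t)) ↔ R₂ t := by
    intro s t
    apply hR
    intro v hv
    rw [hsymm, hsymm, dif_neg hv, dif_neg hv]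
  have hcard : ∀ (W : Φ.Assign → Prop)
      (Pa : ((i : { x : V // x ∈ S }) → Φ.Q i.1) → Prop)
      (Rb : ((i : { x : V // x ∉ S }) → Φ.Q i.1) → Prop),
      (∀ s t, W (e.symm (s, t)) ↔ (Pa s ∧ Rb t)) →
      Nat.card {x : Φ.Assign // W x} = Nat.card {s // Pa s} * Nat.card {t // Rb t} := by
    intro W Pa Rb h
    rw [← Nat.card_prod]
    apply Nat.card_congr
    refine (Equiv.subtypeEquiv e ?_).trans (Equiv.subtypeProdEquivProd)
    intro x
    have h2 := h (e x).1 (e x).2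
    rwa [Prod.mk.eta, Equiv.symm_apply_apply] at h2
  have h1 : Nat.card {x : Φ.Assign // P x ∧ R x}
      = Nat.card {s // P₁ s} * Nat.card {t // R₂ t} :=
    hcard _ _ _ (fun s t => and_congr (hPfac s t) (hRfac s t))
  have h2 : Nat.card {x : Φ.Assign // P x}
      = Nat.card {s // P₁ s} * Nat.card ((i : { x : V // x ∉ S }) → Φ.Q i.1) := by
    rw [hcard (fun x => P x) P₁ (fun _ => True) (fun s t => by simp [hPfac s t])]
    congr 1
    exact Nat.card_congr (Equiv.subtypeUnivEquiv (fun _ => trivial))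
  have h3 : Nat.card {x : Φ.Assign // R x}
      = Nat.card ((i : { x : V // x ∈ S }) → Φ.Q i.1) * Nat.card {t // R₂ t} := by
    rw [hcard (fun x => R x) (fun _ => True) R₂ (fun s t => by simp [hRfac s t])]
    congr 1
    exact Nat.card_congr (Equiv.subtypeUnivEquiv (fun _ => trivial))
  have h4 : Nat.card Φ.Assign
      = Nat.card ((i : { x : V // x ∈ S }) → Φ.Q i.1)
        * Nat.card ((i : { x : V // x ∉ S }) → Φ.Q i.1) := by
    rw [Nat.card_congr e, Nat.card_prod]
  rw [h1, h2, h3, h4]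
  ring


/-- Number of assignments agreeing with `σ` and satisfying `W`. -/
noncomputable def Nc (σ : Φ.PAssign) (W : Φ.Assign → Prop) : ℕ :=
  Nat.card {x : Φ.Assign // Φ.agrees σ x ∧ W x}

lemma condIndep (σ : Φ.PAssign) (S T : Set V) (hdisj : ∀ v, v ∈ S → v ∉ T)
    (P Q : Φ.Assign → Prop)
    (hP : ∀ x y : Φ.Assign, (∀ v ∈ S, x v = y v) → (P x ↔ P y))
    (hQ : ∀ x y : Φ.Assign, (∀ v ∈ T, x v = y v) → (Q x ↔ Q y)) :
    Φ.Nc σ (fun x => P x ∧ Q x) * Φ.Nc σ (fun _ => True) = Φ.Nc σ P * Φ.Nc σ Q := by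
  classical
  set agS : Φ.Assign → Prop := fun x => ∀ v ∈ S, ∀ a, σ v = PVal.val a → x v = a with hagS
  set agC : Φ.Assign → Prop := fun x => ∀ v, v ∉ S → ∀ a, σ v = PVal.val a → x v = a with hagC
  have hag : ∀ x, Φ.agrees σ x ↔ agS x ∧ agC x := by
    intro x
    constructor
    · intro h
      exact ⟨fun v _ a ha => h v a ha, fun v _ a ha => h v a ha⟩
    · rintro ⟨h1, h2⟩ v a ha
      by_cases hv : v ∈ S
      · exact h1 v hv a ha
      · exact h2 v hv a ha
  have hagSloc : ∀ x y : Φ.Assign, (∀ v ∈ S, x v = y v) → (agS x ↔ agS y) := by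
    intro x y h
    constructor <;> intro hx v hv a ha
    · rw [← h v hv]; exact hx v hv a ha
    · rw [h v hv]; exact hx v hv a ha
  have hagCloc : ∀ x y : Φ.Assign, (∀ v, v ∉ S → x v = y v) → (agC x ↔ agC y) := by
    intro x y h
    constructor <;> intro hx v hv a ha
    · rw [← h v hv]; exact hx v hv a ha
    · rw [h v hv]; exact hx v hv a ha
  have hQloc : ∀ x y : Φ.Assign, (∀ v, v ∉ S → x v = y v) → (Q x ↔ Q y) := by
    intro x y h
    exact hQ x y (fun v hv => h v (fun hvS => hdisj v hvS hv))
  have e1 := Φ.indepCount S (fun x => agS x ∧ P x) (fun x => agC x ∧ Q x)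
    (fun x y h => and_congr (hagSloc x y h) (hP x y h))
    (fun x y h => and_congr (hagCloc x y h) (hQloc x y h))
  have e2 := Φ.indepCount S (fun x => agS x ∧ P x) agC
    (fun x y h => and_congr (hagSloc x y h) (hP x y h)) hagCloc
  have e3 := Φ.indepCount S agS (fun x => agC x ∧ Q x)
    hagSloc (fun x y h => and_congr (hagCloc x y h) (hQloc x y h))
  have e4 := Φ.indepCount S agS agC hagSloc hagCloc
  have r1 : Φ.Nc σ (fun x => P x ∧ Q x)
      = Nat.card {x : Φ.Assign // (agS x ∧ P x) ∧ (agC x ∧ Q x)} := by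
    unfold Nc
    exact aux_card_iff (fun x => by rw [hag x]; tauto)
  have r2 : Φ.Nc σ P = Nat.card {x : Φ.Assign // (agS x ∧ P x) ∧ agC x} := by
    unfold Nc
    exact aux_card_iff (fun x => by rw [hag x]; tauto)
  have r3 : Φ.Nc σ Q = Nat.card {x : Φ.Assign // agS x ∧ (agC x ∧ Q x)} := by
    unfold Nc
    exact aux_card_iff (fun x => by rw [hag x]; tauto)
  have r4 : Φ.Nc σ (fun _ => True) = Nat.card {x : Φ.Assign // agS x ∧ agC x} := by
    unfold Nc
    exact aux_card_iff (fun x => by rw [hag x]; tauto)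
  haveI : ∀ v, Nonempty (Φ.Q v) := Φ.nonemptyQ
  have hcA : 0 < Nat.card Φ.Assign := Nat.card_pos
  rw [r1, r2, r3, r4]
  apply Nat.eq_of_mul_eq_mul_right (Nat.mul_pos hcA hcA)
  calc Nat.card {x : Φ.Assign // (agS x ∧ P x) ∧ (agC x ∧ Q x)}
        * Nat.card {x : Φ.Assign // agS x ∧ agC x}
        * (Nat.card Φ.Assign * Nat.card Φ.Assign)
      = (Nat.card {x : Φ.Assign // (agS x ∧ P x) ∧ (agC x ∧ Q x)} * Nat.card Φ.Assign)
        * (Nat.card {x : Φ.Assign // agS x ∧ agC x} * Nat.card Φ.Assign) := by ring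
    _ = (Nat.card {x : Φ.Assign // agS x ∧ P x} * Nat.card {x : Φ.Assign // agC x ∧ Q x})
        * (Nat.card {x : Φ.Assign // agS x} * Nat.card {x : Φ.Assign // agC x}) := by
        rw [e1, e4]
    _ = (Nat.card {x : Φ.Assign // agS x ∧ P x} * Nat.card {x : Φ.Assign // agC x})
        * (Nat.card {x : Φ.Assign // agS x} * Nat.card {x : Φ.Assign // agC x ∧ Q x}) := by
        ring
    _ = (Nat.card {x : Φ.Assign // (agS x ∧ P x) ∧ agC x} * Nat.card Φ.Assign)
        * (Nat.card {x : Φ.Assign // agS x ∧ (agC x ∧ Q x)} * Nat.card Φ.Assign) := by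
        rw [e2, e3]
    _ = Nat.card {x : Φ.Assign // (agS x ∧ P x) ∧ agC x}
        * Nat.card {x : Φ.Assign // agS x ∧ (agC x ∧ Q x)}
        * (Nat.card Φ.Assign * Nat.card Φ.Assign) := by ring


/-- Count of assignments agreeing with `σ` satisfying all constraints in `F`. -/
noncomputable def Ngood (σ : Φ.PAssign) (F : Finset Φ.C) : ℕ :=
  Φ.Nc σ (fun x => ∀ c ∈ F, Φ.sat c x)

/-- Count of assignments agreeing with `σ` violating `c` and satisfying all of `F`. -/
noncomputable def Nbad (σ : Φ.PAssign) (c : Φ.C) (F : Finset Φ.C) : ℕ :=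
  Φ.Nc σ (fun x => ¬ Φ.sat c x ∧ ∀ c' ∈ F, Φ.sat c' x)

lemma sat_iff_of_eqOn (c : Φ.C) (x y : Φ.Assign) (h : ∀ v ∈ Φ.vbl c, x v = y v) :
    Φ.sat c x ↔ Φ.sat c y :=
  ⟨Φ.sat_local c x y h, Φ.sat_local c y x (fun v hv => (h v hv).symm)⟩

lemma Ngood_split (σ : Φ.PAssign) (c : Φ.C) (F : Finset Φ.C) :
    Φ.Ngood σ F = Φ.Ngood σ (insert c F) + Φ.Nbad σ c F := by
  classical
  have h := aux_card_split (fun x : Φ.Assign => Φ.agrees σ x ∧ ∀ c' ∈ F, Φ.sat c' x)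
    (fun x => Φ.sat c x)
  have e1 : Nat.card {x : Φ.Assign //
      (Φ.agrees σ x ∧ ∀ c' ∈ F, Φ.sat c' x) ∧ Φ.sat c x} = Φ.Ngood σ (insert c F) := by
    unfold Ngood Nc
    exact aux_card_iff (fun x => by simp only [Finset.forall_mem_insert]; tauto)
  have e2 : Nat.card {x : Φ.Assign //
      (Φ.agrees σ x ∧ ∀ c' ∈ F, Φ.sat c' x) ∧ ¬ Φ.sat c x} = Φ.Nbad σ c F := by
    unfold Nbad Nc
    exact aux_card_iff (fun x => by tauto)
  have e3 : Nat.card {x : Φ.Assign //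
      Φ.agrees σ x ∧ ∀ c' ∈ F, Φ.sat c' x} = Φ.Ngood σ F := rfl
  rw [e1, e2, e3] at h
  omega

lemma Nbad_mono (σ : Φ.PAssign) (c : Φ.C) {F F₂ : Finset Φ.C} (h : F₂ ⊆ F) :
    Φ.Nbad σ c F ≤ Φ.Nbad σ c F₂ := by
  unfold Nbad Nc
  exact aux_card_mono (fun x hx => ⟨hx.1, hx.2.1, fun c' hc' => hx.2.2 c' (h hc')⟩)

lemma Ngood_mono (σ : Φ.PAssign) {F F₂ : Finset Φ.C} (h : F₂ ⊆ F) :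
    Φ.Ngood σ F ≤ Φ.Ngood σ F₂ := by
  unfold Ngood Nc
  exact aux_card_mono (fun x hx => ⟨hx.1, fun c' hc' => hx.2 c' (h hc')⟩)

lemma lll_core (σ : Φ.PAssign) (t p : ℝ) (ht0 : 0 ≤ t) (ht1 : t ≤ 1)
    (hpt : p ≤ t * (1 - t) ^ Φ.degree)
    (hNtot : 0 < Φ.Nc σ (fun _ => True))
    (hviol : ∀ c, ((Φ.Nc σ (fun x => ¬ Φ.sat c x) : ℝ))
      ≤ p * (Φ.Nc σ (fun _ => True) : ℝ)) :
    ∀ (n : ℕ) (F : Finset Φ.C), F.card ≤ n → ∀ c, c ∉ F →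
      (Φ.Nbad σ c F : ℝ) ≤ t * (Φ.Ngood σ F : ℝ) := by
  classical
  intro n
  induction n using Nat.strong_induction_on with
  | _ n ih =>
  intro F hFn c hc
  set F₁ := F.filter (fun c' => ((Φ.vbl c) ∩ (Φ.vbl c')).Nonempty) with hF₁def
  set F₂ := F.filter (fun c' => ¬ ((Φ.vbl c) ∩ (Φ.vbl c')).Nonempty) with hF₂def
  have hunion : F₂ ∪ F₁ = F := by
    rw [hF₁def, hF₂def, Finset.union_comm]
    exact Finset.filter_union_filter_not_eq _ F
  -- the peeling chain
  have chain : ∀ G : Finset Φ.C, G ⊆ F₁ →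
      (1 - t) ^ G.card * (Φ.Ngood σ F₂ : ℝ) ≤ (Φ.Ngood σ (F₂ ∪ G) : ℝ) := by
    intro G
    induction G using Finset.induction_on with
    | empty => intro _; simp
    | @insert c' G' hc'notG' ihG =>
      intro hsub
      have hc'F₁ : c' ∈ F₁ := hsub (Finset.mem_insert_self c' G')
      have hG'sub : G' ⊆ F₁ := fun z hz => hsub (Finset.mem_insert_of_mem hz)
      have hc'G : c' ∉ F₂ ∪ G' := by
        intro hmem
        rcases Finset.mem_union.mp hmem with h2 | h2
        · exact (Finset.mem_filter.mp h2).2 (Finset.mem_filter.mp hc'F₁).2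
        · exact hc'notG' h2
      have hsubF : F₂ ∪ G' ⊆ F :=
        Finset.union_subset (Finset.filter_subset _ _)
          (hG'sub.trans (Finset.filter_subset _ _))
      have hcardlt : (F₂ ∪ G').card < n := by
        have hss : F₂ ∪ G' ⊂ F := (Finset.ssubset_iff_of_subset hsubF).mpr
          ⟨c', Finset.filter_subset _ _ hc'F₁, hc'G⟩
        exact lt_of_lt_of_le (Finset.card_lt_card hss) hFn
      have hbad : (Φ.Nbad σ c' (F₂ ∪ G') : ℝ) ≤ t * (Φ.Ngood σ (F₂ ∪ G') : ℝ) :=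
        ih _ hcardlt (F₂ ∪ G') le_rfl c' hc'G
      have hsplit : (Φ.Ngood σ (F₂ ∪ G') : ℝ)
          = (Φ.Ngood σ (insert c' (F₂ ∪ G')) : ℝ) + (Φ.Nbad σ c' (F₂ ∪ G') : ℝ) := by
        exact_mod_cast congrArg (fun m : ℕ => (m : ℝ)) (Φ.Ngood_split σ c' (F₂ ∪ G'))
      have hG'chain := ihG hG'sub
      have huni : F₂ ∪ insert c' G' = insert c' (F₂ ∪ G') := Finset.union_insert _ _ _
      rw [huni, Finset.card_insert_of_notMem hc'notG']
      have h1t : (0:ℝ) ≤ 1 - t := by linarith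
      calc (1 - t) ^ (G'.card + 1) * (Φ.Ngood σ F₂ : ℝ)
          = (1 - t) * ((1 - t) ^ G'.card * (Φ.Ngood σ F₂ : ℝ)) := by ring
        _ ≤ (1 - t) * (Φ.Ngood σ (F₂ ∪ G') : ℝ) := by
            exact mul_le_mul_of_nonneg_left hG'chain h1t
        _ ≤ (Φ.Ngood σ (insert c' (F₂ ∪ G')) : ℝ) := by
            rw [hsplit] at hbad ⊢
            linarith
  have hchain := chain F₁ (le_refl F₁)
  rw [hunion] at hchain
  -- F₁.card ≤ degree
  have hF₁Δ : F₁.card ≤ Φ.degree := by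
    have hsub2 : F₁ ⊆ Finset.univ.filter
        (fun c' : Φ.C => c' ≠ c ∧ ((Φ.vbl c) ∩ (Φ.vbl c')).Nonempty) := by
      intro z hz
      rcases Finset.mem_filter.mp hz with ⟨hzF, hzint⟩
      refine Finset.mem_filter.mpr ⟨Finset.mem_univ z, ?_, hzint⟩
      rintro rfl
      exact hc hzF
    have hds := Finset.le_sup (f := fun c : Φ.C => (Finset.univ.filter
      (fun c' : Φ.C => c' ≠ c ∧ ((Φ.vbl c) ∩ (Φ.vbl c')).Nonempty)).card)
      (Finset.mem_univ c)
    exact le_trans (Finset.card_le_card hsub2) hds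
  -- independence
  have hind : (Φ.Nbad σ c F₂ : ℕ) * Φ.Nc σ (fun _ => True)
      = Φ.Nc σ (fun x => ¬ Φ.sat c x) * Φ.Ngood σ F₂ := by
    have := Φ.condIndep σ (↑(Φ.vbl c) : Set V) {v | ∃ c' ∈ F₂, v ∈ Φ.vbl c'}
      (fun v hv hvT => by
        rcases hvT with ⟨c', hc', hv'⟩
        exact (Finset.mem_filter.mp hc').2 ⟨v, Finset.mem_inter.mpr ⟨hv, hv'⟩⟩)
      (fun x => ¬ Φ.sat c x) (fun x => ∀ c' ∈ F₂, Φ.sat c' x)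
      (fun x y h => not_congr (Φ.sat_iff_of_eqOn c x y (fun v hv => h v hv)))
      (fun x y h => by
        constructor <;> intro hx c' hc'
        · exact (Φ.sat_iff_of_eqOn c' x y
            (fun v hv => h v ⟨c', hc', hv⟩)).mp (hx c' hc')
        · exact (Φ.sat_iff_of_eqOn c' x y
            (fun v hv => h v ⟨c', hc', hv⟩)).mpr (hx c' hc'))
    exact this
  have hNF₂nn : (0:ℝ) ≤ (Φ.Ngood σ F₂ : ℝ) := Nat.cast_nonneg _
  have hNtotR : (0:ℝ) < (Φ.Nc σ (fun _ => True) : ℝ) := by exact_mod_cast hNtot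
  have hbad₂ : (Φ.Nbad σ c F₂ : ℝ) ≤ p * (Φ.Ngood σ F₂ : ℝ) := by
    have hindR : (Φ.Nbad σ c F₂ : ℝ) * (Φ.Nc σ (fun _ => True) : ℝ)
        = (Φ.Nc σ (fun x => ¬ Φ.sat c x) : ℝ) * (Φ.Ngood σ F₂ : ℝ) := by
      exact_mod_cast congrArg (fun m : ℕ => (m : ℝ)) hind
    have h2 : (Φ.Nc σ (fun x => ¬ Φ.sat c x) : ℝ) * (Φ.Ngood σ F₂ : ℝ)
        ≤ p * (Φ.Nc σ (fun _ => True) : ℝ) * (Φ.Ngood σ F₂ : ℝ) :=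
      mul_le_mul_of_nonneg_right (hviol c) hNF₂nn
    rw [← hindR] at h2
    have h3 : (Φ.Nbad σ c F₂ : ℝ) * (Φ.Nc σ (fun _ => True) : ℝ)
        ≤ (p * (Φ.Ngood σ F₂ : ℝ)) * (Φ.Nc σ (fun _ => True) : ℝ) := by
      calc (Φ.Nbad σ c F₂ : ℝ) * (Φ.Nc σ (fun _ => True) : ℝ)
          ≤ p * (Φ.Nc σ (fun _ => True) : ℝ) * (Φ.Ngood σ F₂ : ℝ) := h2
        _ = (p * (Φ.Ngood σ F₂ : ℝ)) * (Φ.Nc σ (fun _ => True) : ℝ) := by ring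
    exact le_of_mul_le_mul_right h3 hNtotR
  have hmonoR : (Φ.Nbad σ c F : ℝ) ≤ (Φ.Nbad σ c F₂ : ℝ) := by
    exact_mod_cast Φ.Nbad_mono σ c (by rw [hF₂def]; exact Finset.filter_subset _ _)
  have h1t : (0:ℝ) ≤ 1 - t := by linarith
  have hpow : (1 - t) ^ Φ.degree ≤ (1 - t) ^ F₁.card :=
    pow_le_pow_of_le_one h1t (by linarith) hF₁Δ
  calc (Φ.Nbad σ c F : ℝ) ≤ (Φ.Nbad σ c F₂ : ℝ) := hmonoR
    _ ≤ p * (Φ.Ngood σ F₂ : ℝ) := hbad₂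
    _ ≤ (t * (1 - t) ^ Φ.degree) * (Φ.Ngood σ F₂ : ℝ) :=
        mul_le_mul_of_nonneg_right hpt hNF₂nn
    _ ≤ (t * (1 - t) ^ F₁.card) * (Φ.Ngood σ F₂ : ℝ) := by
        apply mul_le_mul_of_nonneg_right _ hNF₂nn
        exact mul_le_mul_of_nonneg_left hpow ht0
    _ = t * ((1 - t) ^ F₁.card * (Φ.Ngood σ F₂ : ℝ)) := by ring
    _ ≤ t * (Φ.Ngood σ F : ℝ) := mul_le_mul_of_nonneg_left hchain ht0

lemma Ngood_chain (σ : Φ.PAssign) (t p : ℝ) (ht0 : 0 ≤ t) (ht1 : t ≤ 1)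
    (hpt : p ≤ t * (1 - t) ^ Φ.degree)
    (hNtot : 0 < Φ.Nc σ (fun _ => True))
    (hviol : ∀ c, ((Φ.Nc σ (fun x => ¬ Φ.sat c x) : ℝ))
      ≤ p * (Φ.Nc σ (fun _ => True) : ℝ)) :
    ∀ (G F : Finset Φ.C), (∀ z ∈ G, z ∉ F) →
      (1 - t) ^ G.card * (Φ.Ngood σ F : ℝ) ≤ (Φ.Ngood σ (F ∪ G) : ℝ) := by
  classical
  intro G
  induction G using Finset.induction_on with
  | empty => intro F _; simp
  | @insert c' G' hc'notG' ihG =>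
    intro F hdisj
    have hc'G : c' ∉ F ∪ G' := by
      intro hmem
      rcases Finset.mem_union.mp hmem with h2 | h2
      · exact hdisj c' (Finset.mem_insert_self _ _) h2
      · exact hc'notG' h2
    have hbad : (Φ.Nbad σ c' (F ∪ G') : ℝ) ≤ t * (Φ.Ngood σ (F ∪ G') : ℝ) :=
      Φ.lll_core σ t p ht0 ht1 hpt hNtot hviol (F ∪ G').card (F ∪ G') le_rfl c' hc'G
    have hsplit : (Φ.Ngood σ (F ∪ G') : ℝ)
        = (Φ.Ngood σ (insert c' (F ∪ G')) : ℝ) + (Φ.Nbad σ c' (F ∪ G') : ℝ) := by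
      exact_mod_cast congrArg (fun m : ℕ => (m : ℝ)) (Φ.Ngood_split σ c' (F ∪ G'))
    have hG'chain := ihG F (fun z hz => hdisj z (Finset.mem_insert_of_mem hz))
    have huni : F ∪ insert c' G' = insert c' (F ∪ G') := Finset.union_insert _ _ _
    rw [huni, Finset.card_insert_of_notMem hc'notG']
    have h1t : (0:ℝ) ≤ 1 - t := by linarith
    calc (1 - t) ^ (G'.card + 1) * (Φ.Ngood σ F : ℝ)
        = (1 - t) * ((1 - t) ^ G'.card * (Φ.Ngood σ F : ℝ)) := by ring
      _ ≤ (1 - t) * (Φ.Ngood σ (F ∪ G') : ℝ) := mul_le_mul_of_nonneg_left hG'chain h1t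
      _ ≤ (Φ.Ngood σ (insert c' (F ∪ G')) : ℝ) := by
          rw [hsplit] at hbad ⊢
          linarith


lemma agrees_update (σ : Φ.PAssign) {v : V} (hv : ¬ Φ.assigned σ v) (b : Φ.Q v)
    {x : Φ.Assign} (hx : Φ.agrees σ x) : Φ.agrees σ (Function.update x v b) := by
  intro w a ha
  by_cases hwv : w = v
  · subst hwv
    exact absurd ⟨a, ha⟩ hv
  · rw [Function.update_of_ne hwv]
    exact hx w a ha

lemma Nc_coord_const (σ : Φ.PAssign) {v : V} (hv : ¬ Φ.assigned σ v) (b b' : Φ.Q v) :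
    Φ.Nc σ (fun x => x v = b) = Φ.Nc σ (fun x => x v = b') := by
  classical
  unfold Nc
  apply Nat.card_congr
  have key : ∀ (b b' : Φ.Q v) (x : Φ.Assign), x v = b →
      Function.update (Function.update x v b') v b = x := by
    intro b b' x hx
    rw [Function.update_idem, ← hx, Function.update_eq_self]
  refine ⟨fun x => ⟨Function.update x.1 v b', Φ.agrees_update σ hv b' x.2.1,
      Function.update_self v b' x.1⟩,
    fun x => ⟨Function.update x.1 v b, Φ.agrees_update σ hv b x.2.1,
      Function.update_self v b x.1⟩, ?_, ?_⟩
  · intro x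
    exact Subtype.ext (key b b' x.1 x.2.2)
  · intro x
    exact Subtype.ext (key b' b x.1 x.2.2)

lemma Nc_coord_sum (σ : Φ.PAssign) (W : Φ.Assign → Prop) (v : V) :
    ∑ b : Φ.Q v, Φ.Nc σ (fun x => W x ∧ x v = b) = Φ.Nc σ W := by
  classical
  unfold Nc
  rw [← aux_card_fiber_sum (fun x : Φ.Assign => Φ.agrees σ x ∧ W x) (fun x => x v)]
  apply Finset.sum_congr rfl
  intro b _
  exact aux_card_iff (fun x => by tauto)

lemma Nc_coord_mul (σ : Φ.PAssign) {v : V} (hv : ¬ Φ.assigned σ v) (b : Φ.Q v) :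
    Φ.Nc σ (fun x => x v = b) * Fintype.card (Φ.Q v) = Φ.Nc σ (fun _ => True) := by
  classical
  have hsum := Φ.Nc_coord_sum σ (fun _ => True) v
  have hconst : ∀ b' : Φ.Q v, Φ.Nc σ (fun x => (fun _ : Φ.Assign => True) x ∧ x v = b')
      = Φ.Nc σ (fun x => x v = b) := by
    intro b'
    have h1 : Φ.Nc σ (fun x => (fun _ : Φ.Assign => True) x ∧ x v = b')
        = Φ.Nc σ (fun x => x v = b') := by
      unfold Nc
      exact aux_card_iff (fun x => by tauto)
    rw [h1]
    exact Φ.Nc_coord_const σ hv b' b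
  rw [Finset.sum_congr rfl (fun b' _ => hconst b')] at hsum
  rw [Finset.sum_const, smul_eq_mul] at hsum
  rw [← hsum, Fintype.card, mul_comm]

end CSP

lemma analytic_lll (Δ : ℕ) (p : ℝ) (hp : 0 < p)
    (hlt : Real.exp 1 * p * ((Δ : ℝ) + 1) < 1) :
    p ≤ (Real.exp 1 * p) * (1 - Real.exp 1 * p) ^ Δ := by
  have he2 : (2:ℝ) ≤ Real.exp 1 := by
    have := Real.add_one_le_exp 1
    linarith
  set t := Real.exp 1 * p with ht
  have ht0 : 0 < t := mul_pos (Real.exp_pos 1) hp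
  have hkey : 1 ≤ Real.exp 1 * (1 - t) ^ Δ := by
    rcases Nat.eq_zero_or_pos Δ with hΔ | hΔ
    · subst hΔ
      rw [pow_zero, mul_one]
      linarith
    · set D := (Δ : ℝ) with hD
      have hD1 : 1 ≤ D := by rw [hD]; exact Nat.one_le_cast.mpr hΔ
      have hD0 : 0 < D := by linarith
      have htle : t < 1 / (D + 1) := by
        rw [lt_div_iff₀ (by linarith)]
        linarith
      have h1t : D / (D + 1) ≤ 1 - t := by
        rw [div_le_iff₀ (by linarith)]
        nlinarith
      have ha0 : (0:ℝ) ≤ D / (D + 1) := by positivity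
      have hpow1 : (D / (D + 1)) ^ Δ ≤ (1 - t) ^ Δ := pow_le_pow_left₀ ha0 h1t Δ
      have hexp : (1 + 1 / D) ≤ Real.exp (1 / D) := by
        have := Real.add_one_le_exp (1 / D)
        linarith
      have hpow2 : (1 + 1 / D) ^ Δ ≤ Real.exp (1 / D) ^ Δ :=
        pow_le_pow_left₀ (by positivity) hexp Δ
      have hexpD : Real.exp (1 / D) ^ Δ = Real.exp 1 := by
        rw [← Real.exp_nat_mul]
        congr 1
        rw [← hD]
        field_simp
      have hprod : (D / (D + 1)) ^ Δ * (1 + 1 / D) ^ Δ = 1 := by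
        rw [← mul_pow]
        have : D / (D + 1) * (1 + 1 / D) = 1 := by
          field_simp
        rw [this, one_pow]
      calc (1:ℝ) = (D / (D + 1)) ^ Δ * (1 + 1 / D) ^ Δ := hprod.symm
        _ ≤ (1 - t) ^ Δ * Real.exp 1 := by
            apply mul_le_mul hpow1 (hexpD ▸ hpow2) (by positivity) (pow_nonneg (le_trans ha0 h1t) Δ)
        _ = Real.exp 1 * (1 - t) ^ Δ := by ring
  have : t * (1 - t) ^ Δ = p * (Real.exp 1 * (1 - t) ^ Δ) := by rw [ht]; ring
  rw [this]
  exact le_mul_of_one_le_right hp.le hkey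

set_option maxHeartbeats 1000000 in
/-- **Marginal lower bound (local uniformity under conditioning).**
If `e·p'·q·(Δ+1) < 1`, `σ` is feasible, `ℙ[¬c | σ] ≤ p'·q` for all `c`, and `v` is
unassigned in `σ`, then `min_a μ^σ_v(a) ≥ 1/q_v − ((1−e·p'·q)^{−(Δ+1)} − 1)`;
in particular with `η := (1−e·p'·q)^{−(Δ+1)} − 1`, `ζ := (8·e·q·k·Δ³)⁻¹` and
`θ_v := 1/q_v − η − ζ`, one has `min_a μ^σ_v(a) ≥ θ_v + ζ`. -/
theorem statement5 {V : Type} [Fintype V] [DecidableEq V] (Φ : CSP V)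
    (p' : ℝ) (hp' : p' ∈ Set.Ioo (0 : ℝ) 1)
    (hlll : Real.exp 1 * p' * (Φ.qmax : ℝ) * ((Φ.degree : ℝ) + 1) < 1)
    (σ : Φ.PAssign) (hfeas : ∃ x ∈ Φ.Sat, Φ.agrees σ x)
    (hcond : ∀ c, Φ.condProb (Φ.viol c) σ ≤ p' * (Φ.qmax : ℝ))
    (v : V) (hv : ¬ Φ.assigned σ v) :
    (∀ a : Φ.Q v,
      1 / (Fintype.card (Φ.Q v) : ℝ)
          - (((1 - Real.exp 1 * p' * (Φ.qmax : ℝ)) ^ (Φ.degree + 1))⁻¹ - 1)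
        ≤ Φ.margCond σ v a) ∧
    (∀ a : Φ.Q v,
      (1 / (Fintype.card (Φ.Q v) : ℝ)
          - (((1 - Real.exp 1 * p' * (Φ.qmax : ℝ)) ^ (Φ.degree + 1))⁻¹ - 1)
          - (8 * Real.exp 1 * (Φ.qmax : ℝ) * (Φ.width : ℝ) * (Φ.degree : ℝ) ^ 3)⁻¹)
        + (8 * Real.exp 1 * (Φ.qmax : ℝ) * (Φ.width : ℝ) * (Φ.degree : ℝ) ^ 3)⁻¹
        ≤ Φ.margCond σ v a) := by
  classical
  obtain ⟨x₀, hx₀sat, hx₀ag⟩ := hfeas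
  have hqv2 : 2 ≤ Fintype.card (Φ.Q v) := Φ.card_two v
  have hqvq : Fintype.card (Φ.Q v) ≤ Φ.qmax :=
    Finset.le_sup (f := fun v : V => Fintype.card (Φ.Q v)) (Finset.mem_univ v)
  have hq2 : 2 ≤ Φ.qmax := le_trans hqv2 hqvq
  have hqR : (2:ℝ) ≤ (Φ.qmax : ℝ) := by exact_mod_cast hq2
  have hp0 : 0 < p' * (Φ.qmax : ℝ) := mul_pos hp'.1 (by linarith)
  have hteq : Real.exp 1 * p' * (Φ.qmax : ℝ) = Real.exp 1 * (p' * (Φ.qmax : ℝ)) := by ring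
  have hlll' : Real.exp 1 * (p' * (Φ.qmax : ℝ)) * ((Φ.degree : ℝ) + 1) < 1 := by
    calc Real.exp 1 * (p' * (Φ.qmax : ℝ)) * ((Φ.degree : ℝ) + 1)
        = Real.exp 1 * p' * (Φ.qmax : ℝ) * ((Φ.degree : ℝ) + 1) := by ring
      _ < 1 := hlll
  have hpt : p' * (Φ.qmax : ℝ) ≤ (Real.exp 1 * p' * (Φ.qmax : ℝ))
      * (1 - Real.exp 1 * p' * (Φ.qmax : ℝ)) ^ Φ.degree := by
    have := analytic_lll Φ.degree (p' * (Φ.qmax : ℝ)) hp0 hlll'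
    rw [hteq]
    exact this
  have ht0 : 0 < Real.exp 1 * p' * (Φ.qmax : ℝ) := by
    have := Real.exp_pos 1
    have := hp'.1
    nlinarith
  have hΔ0 : (0:ℝ) ≤ (Φ.degree : ℝ) := Nat.cast_nonneg _
  have ht1 : Real.exp 1 * p' * (Φ.qmax : ℝ) < 1 := by nlinarith [hlll]
  have h1t0 : (0:ℝ) < 1 - Real.exp 1 * p' * (Φ.qmax : ℝ) := by linarith
  -- positivity of basic counts
  have hNtot : 0 < Φ.Nc σ (fun _ => True) := by
    haveI : Nonempty {x : Φ.Assign // Φ.agrees σ x ∧ True} := ⟨⟨x₀, hx₀ag, trivial⟩⟩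
    exact Nat.card_pos
  have hNtotR : (0:ℝ) < (Φ.Nc σ (fun _ => True) : ℝ) := by exact_mod_cast hNtot
  have hDen0 : 0 < Φ.Nc σ (fun x => ∀ c, Φ.sat c x) := by
    haveI : Nonempty {x : Φ.Assign // Φ.agrees σ x ∧ ∀ c, Φ.sat c x} :=
      ⟨⟨x₀, hx₀ag, fun c => hx₀sat c⟩⟩
    exact Nat.card_pos
  have hDenR : (0:ℝ) < (Φ.Nc σ (fun x => ∀ c, Φ.sat c x) : ℝ) := by exact_mod_cast hDen0
  -- violation bound
  have hviolR : ∀ c, ((Φ.Nc σ (fun x => ¬ Φ.sat c x) : ℝ))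
      ≤ (p' * (Φ.qmax : ℝ)) * (Φ.Nc σ (fun _ => True) : ℝ) := by
    intro c
    have hv1 : Φ.Nc σ (fun x => ¬ Φ.sat c x) = (Φ.viol c ∩ {x | Φ.agrees σ x}).ncard := by
      rw [← Nat.card_coe_set_eq]
      exact aux_card_iff (fun x => by
        simp only [Set.mem_inter_iff, Set.mem_setOf_eq, CSP.viol]
        tauto)
    have hv2 : Φ.Nc σ (fun _ => True) = ({x : Φ.Assign | Φ.agrees σ x}).ncard := by
      rw [← Nat.card_coe_set_eq]
      exact aux_card_iff (fun x => by simp [Set.mem_setOf_eq])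
    have hc := hcond c
    rw [CSP.condProb] at hc
    rw [hv1, hv2]
    rw [← hv2] at hc ⊢
    rw [div_le_iff₀ hNtotR] at hc
    calc ((Φ.viol c ∩ {x | Φ.agrees σ x}).ncard : ℝ)
        ≤ p' * (Φ.qmax : ℝ) * (Φ.Nc σ (fun _ => True) : ℝ) := hc
      _ = (p' * (Φ.qmax : ℝ)) * (Φ.Nc σ (fun _ => True) : ℝ) := by ring
  -- the two constraint families
  have hGvFv : (Finset.univ.filter (fun c : Φ.C => v ∉ Φ.vbl c))
      ∪ (Finset.univ.filter (fun c : Φ.C => v ∈ Φ.vbl c)) = Finset.univ := by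
    ext z
    simp [em]
    tauto
  have hdisjGF : ∀ z ∈ (Finset.univ.filter (fun c : Φ.C => v ∈ Φ.vbl c)),
      z ∉ (Finset.univ.filter (fun c : Φ.C => v ∉ Φ.vbl c)) := by
    intro z hz hz2
    exact (Finset.mem_filter.mp hz2).2 (Finset.mem_filter.mp hz).2
  have hFvcard : (Finset.univ.filter (fun c : Φ.C => v ∈ Φ.vbl c)).card ≤ Φ.degree + 1 := by
    rcases (Finset.univ.filter (fun c : Φ.C => v ∈ Φ.vbl c)).eq_empty_or_nonempty with he | he
    · rw [he]; simp
    · obtain ⟨c₀, hc₀⟩ := he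
      have hc₀v : v ∈ Φ.vbl c₀ := (Finset.mem_filter.mp hc₀).2
      have hsub : (Finset.univ.filter (fun c : Φ.C => v ∈ Φ.vbl c))
          ⊆ insert c₀ (Finset.univ.filter
            (fun c' : Φ.C => c' ≠ c₀ ∧ ((Φ.vbl c₀) ∩ (Φ.vbl c')).Nonempty)) := by
        intro z hz
        by_cases hzc : z = c₀
        · subst hzc; exact Finset.mem_insert_self _ _
        · refine Finset.mem_insert_of_mem (Finset.mem_filter.mpr
            ⟨Finset.mem_univ _, hzc, ⟨v, Finset.mem_inter.mpr
              ⟨hc₀v, (Finset.mem_filter.mp hz).2⟩⟩⟩)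
      have hds := Finset.le_sup (f := fun c : Φ.C => (Finset.univ.filter
        (fun c' : Φ.C => c' ≠ c ∧ ((Φ.vbl c) ∩ (Φ.vbl c')).Nonempty)).card)
        (Finset.mem_univ c₀)
      calc (Finset.univ.filter (fun c : Φ.C => v ∈ Φ.vbl c)).card
          ≤ (insert c₀ (Finset.univ.filter
            (fun c' : Φ.C => c' ≠ c₀ ∧ ((Φ.vbl c₀) ∩ (Φ.vbl c')).Nonempty))).card :=
            Finset.card_le_card hsub
        _ ≤ (Finset.univ.filter
            (fun c' : Φ.C => c' ≠ c₀ ∧ ((Φ.vbl c₀) ∩ (Φ.vbl c')).Nonempty)).card + 1 :=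
            Finset.card_insert_le _ _
        _ ≤ Φ.degree + 1 := by exact Nat.add_le_add_right hds 1
  -- chain bound : w * NGv ≤ Den
  have hchain := Φ.Ngood_chain σ (Real.exp 1 * p' * (Φ.qmax : ℝ)) (p' * (Φ.qmax : ℝ))
    ht0.le ht1.le hpt hNtot hviolR
    (Finset.univ.filter (fun c : Φ.C => v ∈ Φ.vbl c))
    (Finset.univ.filter (fun c : Φ.C => v ∉ Φ.vbl c)) hdisjGF
  rw [hGvFv] at hchain
  have hDenUniv : Φ.Ngood σ Finset.univ = Φ.Nc σ (fun x => ∀ c, Φ.sat c x) :=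
    aux_card_iff (fun x => by simp)
  rw [hDenUniv] at hchain
  have hpowle : (1 - Real.exp 1 * p' * (Φ.qmax : ℝ)) ^ (Φ.degree + 1)
      ≤ (1 - Real.exp 1 * p' * (Φ.qmax : ℝ))
        ^ (Finset.univ.filter (fun c : Φ.C => v ∈ Φ.vbl c)).card :=
    pow_le_pow_of_le_one h1t0.le (by linarith) hFvcard
  have hNGv0 : (0:ℝ) ≤ (Φ.Ngood σ (Finset.univ.filter (fun c : Φ.C => v ∉ Φ.vbl c)) : ℝ) :=
    Nat.cast_nonneg _
  have hwchain : (1 - Real.exp 1 * p' * (Φ.qmax : ℝ)) ^ (Φ.degree + 1)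
      * (Φ.Ngood σ (Finset.univ.filter (fun c : Φ.C => v ∉ Φ.vbl c)) : ℝ)
      ≤ (Φ.Nc σ (fun x => ∀ c, Φ.sat c x) : ℝ) :=
    le_trans (mul_le_mul_of_nonneg_right hpowle hNGv0) hchain
  -- per-value counting
  have hbcount : ∀ b : Φ.Q v,
      Φ.Nc σ (fun x => (∀ c' ∈ (Finset.univ.filter (fun c : Φ.C => v ∉ Φ.vbl c)),
        Φ.sat c' x) ∧ x v = b) * Fintype.card (Φ.Q v)
      = Φ.Ngood σ (Finset.univ.filter (fun c : Φ.C => v ∉ Φ.vbl c)) := by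
    intro b
    have hci := Φ.condIndep σ
      {w | ∃ c' ∈ (Finset.univ.filter (fun c : Φ.C => v ∉ Φ.vbl c)), w ∈ Φ.vbl c'}
      ({v} : Set V)
      (by
        rintro w ⟨c', hc', hw⟩ hwv
        rw [Set.mem_singleton_iff] at hwv
        subst hwv
        exact (Finset.mem_filter.mp hc').2 hw)
      (fun x => ∀ c' ∈ (Finset.univ.filter (fun c : Φ.C => v ∉ Φ.vbl c)), Φ.sat c' x)
      (fun x => x v = b)
      (by
        intro x y h
        constructor <;> intro hx c' hc'
        · exact (Φ.sat_iff_of_eqOn c' x y (fun u hu => h u ⟨c', hc', hu⟩)).mp (hx c' hc')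
        · exact (Φ.sat_iff_of_eqOn c' x y (fun u hu => h u ⟨c', hc', hu⟩)).mpr (hx c' hc'))
      (by
        intro x y h
        show x v = b ↔ y v = b
        rw [h v rfl])
    have hcm := Φ.Nc_coord_mul σ hv b
    apply Nat.eq_of_mul_eq_mul_right hNtot
    calc Φ.Nc σ (fun x => (∀ c' ∈ (Finset.univ.filter (fun c : Φ.C => v ∉ Φ.vbl c)),
          Φ.sat c' x) ∧ x v = b) * Fintype.card (Φ.Q v) * Φ.Nc σ (fun _ => True)
        = Φ.Nc σ (fun x => (∀ c' ∈ (Finset.univ.filter (fun c : Φ.C => v ∉ Φ.vbl c)),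
          Φ.sat c' x) ∧ x v = b) * Φ.Nc σ (fun _ => True) * Fintype.card (Φ.Q v) := by ring
      _ = Φ.Nc σ (fun x => ∀ c' ∈ (Finset.univ.filter (fun c : Φ.C => v ∉ Φ.vbl c)),
          Φ.sat c' x) * Φ.Nc σ (fun x => x v = b) * Fintype.card (Φ.Q v) := by rw [hci]
      _ = Φ.Nc σ (fun x => ∀ c' ∈ (Finset.univ.filter (fun c : Φ.C => v ∉ Φ.vbl c)),
          Φ.sat c' x) * (Φ.Nc σ (fun x => x v = b) * Fintype.card (Φ.Q v)) := by ring
      _ = Φ.Ngood σ (Finset.univ.filter (fun c : Φ.C => v ∉ Φ.vbl c))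
          * Φ.Nc σ (fun _ => True) := by rw [hcm]; rfl
  have hNumUB : ∀ b : Φ.Q v,
      Φ.Nc σ (fun x => (∀ c, Φ.sat c x) ∧ x v = b) * Fintype.card (Φ.Q v)
      ≤ Φ.Ngood σ (Finset.univ.filter (fun c : Φ.C => v ∉ Φ.vbl c)) := by
    intro b
    rw [← hbcount b]
    apply Nat.mul_le_mul_right
    exact aux_card_mono (fun x hx => ⟨hx.1, ⟨fun c' _ => hx.2.1 c', hx.2.2⟩⟩)
  have hsum : (∑ b : Φ.Q v, Φ.Nc σ (fun x => (∀ c, Φ.sat c x) ∧ x v = b))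
      = Φ.Nc σ (fun x => ∀ c, Φ.sat c x) := Φ.Nc_coord_sum σ _ v
  -- rewrite margCond
  have hmarg : ∀ b : Φ.Q v, Φ.margCond σ v b
      = (Φ.Nc σ (fun x => (∀ c, Φ.sat c x) ∧ x v = b) : ℝ)
        / (Φ.Nc σ (fun x => ∀ c, Φ.sat c x) : ℝ) := by
    intro b
    have hnum : ({x ∈ Φ.Sat | Φ.agrees σ x ∧ x v = b}).ncard
        = Φ.Nc σ (fun x => (∀ c, Φ.sat c x) ∧ x v = b) := by
      rw [← Nat.card_coe_set_eq]
      exact aux_card_iff (fun x => by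
        simp only [Set.mem_setOf_eq, CSP.Sat]
        tauto)
    have hden : ({x ∈ Φ.Sat | Φ.agrees σ x}).ncard
        = Φ.Nc σ (fun x => ∀ c, Φ.sat c x) := by
      rw [← Nat.card_coe_set_eq]
      exact aux_card_iff (fun x => by
        simp only [Set.mem_setOf_eq, CSP.Sat]
        tauto)
    rw [CSP.margCond, hnum, hden]
  -- main bound
  have hqvR : (0:ℝ) < (Fintype.card (Φ.Q v) : ℝ) := by
    have : (2:ℝ) ≤ (Fintype.card (Φ.Q v) : ℝ) := by exact_mod_cast hqv2
    linarith
  have hw0 : (0:ℝ) < (1 - Real.exp 1 * p' * (Φ.qmax : ℝ)) ^ (Φ.degree + 1) :=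
    pow_pos h1t0 _
  have hw1 : (1 - Real.exp 1 * p' * (Φ.qmax : ℝ)) ^ (Φ.degree + 1) ≤ 1 :=
    pow_le_one₀ h1t0.le (by linarith)
  have hK1 : 1 ≤ ((1 - Real.exp 1 * p' * (Φ.qmax : ℝ)) ^ (Φ.degree + 1))⁻¹ :=
    (one_le_inv₀ hw0).mpr hw1
  have main : ∀ a : Φ.Q v,
      1 / (Fintype.card (Φ.Q v) : ℝ)
          - (((1 - Real.exp 1 * p' * (Φ.qmax : ℝ)) ^ (Φ.degree + 1))⁻¹ - 1)
        ≤ Φ.margCond σ v a := by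
    intro a
    rw [hmarg a, le_div_iff₀ hDenR]
    -- real abbreviations via hypotheses
    have hEach : ∀ b : Φ.Q v, (Φ.Nc σ (fun x => (∀ c, Φ.sat c x) ∧ x v = b) : ℝ)
        * (Fintype.card (Φ.Q v) : ℝ)
        ≤ (Φ.Ngood σ (Finset.univ.filter (fun c : Φ.C => v ∉ Φ.vbl c)) : ℝ) := by
      intro b
      exact_mod_cast hNumUB b
    have hsumR : (∑ b : Φ.Q v, (Φ.Nc σ (fun x => (∀ c, Φ.sat c x) ∧ x v = b) : ℝ))
        = (Φ.Nc σ (fun x => ∀ c, Φ.sat c x) : ℝ) := by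
      rw [← Nat.cast_sum]
      exact congrArg _ hsum
    have hEr : (∑ b ∈ Finset.univ.erase a,
        (Φ.Nc σ (fun x => (∀ c, Φ.sat c x) ∧ x v = b) : ℝ))
        = (Φ.Nc σ (fun x => ∀ c, Φ.sat c x) : ℝ)
          - (Φ.Nc σ (fun x => (∀ c, Φ.sat c x) ∧ x v = a) : ℝ) := by
      have := Finset.sum_erase_add Finset.univ
        (fun b : Φ.Q v => (Φ.Nc σ (fun x => (∀ c, Φ.sat c x) ∧ x v = b) : ℝ))
        (Finset.mem_univ a)
      rw [hsumR] at this
      linarith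
    have hcardE : ((Finset.univ.erase a).card : ℝ) = (Fintype.card (Φ.Q v) : ℝ) - 1 := by
      have h1le : 1 ≤ Fintype.card (Φ.Q v) := le_trans one_le_two hqv2
      have hce : (Finset.univ.erase a).card = Fintype.card (Φ.Q v) - 1 := by
        rw [Finset.card_erase_of_mem (Finset.mem_univ a), Finset.card_univ]
      rw [hce, Nat.cast_sub h1le, Nat.cast_one]
    have hErUB : ((Φ.Nc σ (fun x => ∀ c, Φ.sat c x) : ℝ)
          - (Φ.Nc σ (fun x => (∀ c, Φ.sat c x) ∧ x v = a) : ℝ))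
          * (Fintype.card (Φ.Q v) : ℝ)
        ≤ ((Fintype.card (Φ.Q v) : ℝ) - 1)
          * (Φ.Ngood σ (Finset.univ.filter (fun c : Φ.C => v ∉ Φ.vbl c)) : ℝ) := by
      rw [← hEr, Finset.sum_mul, ← hcardE]
      have hb := Finset.sum_le_card_nsmul (Finset.univ.erase a)
        (fun b : Φ.Q v => (Φ.Nc σ (fun x => (∀ c, Φ.sat c x) ∧ x v = b) : ℝ)
          * (Fintype.card (Φ.Q v) : ℝ))
        ((Φ.Ngood σ (Finset.univ.filter (fun c : Φ.C => v ∉ Φ.vbl c)) : ℝ))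
        (fun b _ => hEach b)
      rw [nsmul_eq_mul] at hb
      exact hb
    have hNGvK : (Φ.Ngood σ (Finset.univ.filter (fun c : Φ.C => v ∉ Φ.vbl c)) : ℝ)
        ≤ ((1 - Real.exp 1 * p' * (Φ.qmax : ℝ)) ^ (Φ.degree + 1))⁻¹
          * (Φ.Nc σ (fun x => ∀ c, Φ.sat c x) : ℝ) := by
      have hKw : ((1 - Real.exp 1 * p' * (Φ.qmax : ℝ)) ^ (Φ.degree + 1))⁻¹
          * ((1 - Real.exp 1 * p' * (Φ.qmax : ℝ)) ^ (Φ.degree + 1)) = 1 :=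
        inv_mul_cancel₀ (ne_of_gt hw0)
      have hh := mul_le_mul_of_nonneg_left hwchain
        (le_of_lt (inv_pos.mpr hw0))
      calc (Φ.Ngood σ (Finset.univ.filter (fun c : Φ.C => v ∉ Φ.vbl c)) : ℝ)
          = ((1 - Real.exp 1 * p' * (Φ.qmax : ℝ)) ^ (Φ.degree + 1))⁻¹
            * ((1 - Real.exp 1 * p' * (Φ.qmax : ℝ)) ^ (Φ.degree + 1)
              * (Φ.Ngood σ (Finset.univ.filter (fun c : Φ.C => v ∉ Φ.vbl c)) : ℝ)) := by
            rw [← mul_assoc, hKw, one_mul]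
        _ ≤ ((1 - Real.exp 1 * p' * (Φ.qmax : ℝ)) ^ (Φ.degree + 1))⁻¹
            * (Φ.Nc σ (fun x => ∀ c, Φ.sat c x) : ℝ) := hh
    -- final arithmetic
    set K := ((1 - Real.exp 1 * p' * (Φ.qmax : ℝ)) ^ (Φ.degree + 1))⁻¹ with hKdef
    set Qv := (Fintype.card (Φ.Q v) : ℝ) with hQvdef
    set De := (Φ.Nc σ (fun x => ∀ c, Φ.sat c x) : ℝ) with hDedef
    set Nm := (Φ.Nc σ (fun x => (∀ c, Φ.sat c x) ∧ x v = a) : ℝ) with hNmdef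
    set G := (Φ.Ngood σ (Finset.univ.filter (fun c : Φ.C => v ∉ Φ.vbl c)) : ℝ) with hGdef
    have h5 : (Qv - 1) * G ≤ (Qv - 1) * (K * De) :=
      mul_le_mul_of_nonneg_left hNGvK (by linarith)
    have h6 : De * Qv - Nm * Qv ≤ (Qv - 1) * (K * De) := by linarith [hErUB, h5]
    have h7 : De ≤ K * De := le_mul_of_one_le_left hDenR.le hK1
    have hgoal : (1 / Qv - (K - 1)) * De * Qv ≤ Nm * Qv := by
      have h1q : (1 / Qv) * Qv = 1 := by field_simp
      have hexp : (1 / Qv - (K - 1)) * De * Qv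
          = ((1 / Qv) * Qv) * De - K * De * Qv + De * Qv := by ring
      rw [hexp, h1q]
      linarith [h6, h7]
    exact le_of_mul_le_mul_right hgoal hqvR
  refine ⟨main, fun a => ?_⟩
  have := main a
  linarith
end

section
/- Let Φ = (V, 𝒬, 𝒞) be a CSP formula, p' ∈ (0,1) with e·p'·q·(Δ+1) < 1, and X ∈ ∏_{v∈V}(Q_v ∪ {☆}) a partial assignment (having no ⋆ values) with ℙ[¬c | X] ≤ p'·q for every c ∈ 𝒞. Then the number of satisfying assignments of Φ that agree with X on Λ(X), divided by the number of all assignments in 𝒬 that agree with X on Λ(X), is at least (1 − e·p'·q)^{|𝒞|}. -/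
open Finset

/-!
Conditioned on agreeing with `X`, the uniform distribution is still a product distribution, so
constraints on disjoint sets of variables stay independent. Put `ε = e·p` with `p = p'·q`. The local
lemma argument shows, by strong induction on `S`, that `ℙ[¬c | X, S satisfied] ≤ ε` for `c ∉ S`:
the constraints of `S` sharing no variable with `c` are independent of `¬c`, and conditioning on
the at most `Δ` remaining ones costs at most a factor `(1 - ε)^Δ ≥ 1/e`. Satisfying the
constraints one at a time then loses a factor of at most `1 - ε` each.
-/

open Real

lemma one_le_exp_one_mul_one_sub_pow {x : ℝ} {d : ℕ} (hx : 0 ≤ x) (hxd : x * (d + 1) < 1) :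
    1 ≤ exp 1 * (1 - x) ^ d := by
  have hx1 : 0 < 1 - x := by nlinarith
  -- `log (1 - x) ≥ 1 - (1 - x)⁻¹ = -x / (1 - x) ≥ -1 / d`
  have hlog : -1 ≤ d * log (1 - x) := by
    have hd : -1 ≤ d * (1 - (1 - x)⁻¹) := by
      have h : d * (1 - (1 - x)⁻¹) + 1 = (1 - x * (d + 1)) / (1 - x) := by field_simp; ring
      have : 0 ≤ (1 - x * (d + 1)) / (1 - x) := div_nonneg (by linarith) hx1.le
      linarith
    exact hd.trans (mul_le_mul_of_nonneg_left (one_sub_inv_le_log_of_pos hx1) d.cast_nonneg)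
  calc 1 = exp 0 := exp_zero.symm
    _ ≤ exp (1 + d * log (1 - x)) := exp_le_exp.2 (by linarith)
    _ = exp 1 * (1 - x) ^ d := by rw [exp_add, exp_nat_mul, exp_log hx1]

namespace Finset

variable {ι : Type*} {β : ι → Type*} [DecidableEq ι]

/-- Independence, under the uniform distribution on `A`, of an event depending only on the
coordinates in `T` and one depending only on the coordinates outside `T`. -/
lemma card_filter_and_mul_card_eq (T : Finset ι) {A : Finset (∀ i, β i)}
    (hA : ∀ x ∈ A, ∀ y ∈ A, T.piecewise x y ∈ A) {P R : (∀ i, β i) → Prop}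
    [DecidablePred P] [DecidablePred R]
    (hP : ∀ x y, (∀ i ∈ T, x i = y i) → P x → P y)
    (hR : ∀ x y, (∀ i ∉ T, x i = y i) → R x → R y) :
    #(A.filter fun x => P x ∧ R x) * #A = #(A.filter P) * #(A.filter R) := by
  rw [← card_product, ← card_product]
  have swap : ∀ x y : ∀ i, β i,
      T.piecewise (T.piecewise x y) (T.piecewise y x) = x ∧
      T.piecewise (T.piecewise y x) (T.piecewise x y) = y := fun x y => by
    simp only [piecewise_idem_left, piecewise_idem_right, piecewise_same, and_self]
  let glue : (∀ i, β i) × (∀ i, β i) → (∀ i, β i) × (∀ i, β i) :=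
    fun z => (T.piecewise z.1 z.2, T.piecewise z.2 z.1)
  refine card_nbij' glue glue ?_ ?_ (fun z _ => Prod.ext (swap z.1 z.2).1 (swap z.1 z.2).2)
    (fun z _ => Prod.ext (swap z.1 z.2).1 (swap z.1 z.2).2)
  · rintro ⟨x, y⟩ h
    simp only [coe_product, Set.mem_prod, mem_coe, mem_filter] at h ⊢
    obtain ⟨⟨hx, hPx, hRx⟩, hy⟩ := h
    exact ⟨⟨hA x hx y hy, hP x _ (fun i hi => (piecewise_eq_of_mem _ _ _ hi).symm) hPx⟩,
      hA y hy x hx, hR x _ (fun i hi => (piecewise_eq_of_notMem _ _ _ hi).symm) hRx⟩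
  · rintro ⟨x, y⟩ h
    simp only [coe_product, Set.mem_prod, mem_coe, mem_filter] at h ⊢
    obtain ⟨⟨hx, hPx⟩, hy, hRy⟩ := h
    exact ⟨⟨hA x hx y hy, hP x _ (fun i hi => (piecewise_eq_of_mem _ _ _ hi).symm) hPx,
      hR y _ (fun i hi => (piecewise_eq_of_notMem _ _ _ hi).symm) hRy⟩, hA y hy x hx⟩

end Finset

namespace CSP

open scoped Classical

variable {V : Type} [Fintype V] [DecidableEq V] (Φ : CSP V) (X : Φ.PAssign)

noncomputable def extensions : Finset Φ.Assign := univ.filter (Φ.agrees X)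

noncomputable def satExt (S : Finset Φ.C) : Finset Φ.Assign :=
  (Φ.extensions X).filter fun x => ∀ c ∈ S, Φ.sat c x

noncomputable def violExt (c : Φ.C) (S : Finset Φ.C) : Finset Φ.Assign :=
  (Φ.satExt X S).filter fun x => ¬ Φ.sat c x

lemma satExt_empty : Φ.satExt X ∅ = Φ.extensions X := by
  simp [satExt]

lemma satExt_insert (c : Φ.C) (S : Finset Φ.C) :
    Φ.satExt X (insert c S) = (Φ.satExt X S).filter (Φ.sat c) := by
  ext x
  simp only [satExt, mem_filter, forall_mem_insert]
  tauto

lemma violExt_antitone (c : Φ.C) {S T : Finset Φ.C} (h : S ⊆ T) :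
    Φ.violExt X c T ⊆ Φ.violExt X c S :=
  fun _ hx => by
    simp only [violExt, satExt, mem_filter] at hx ⊢
    exact ⟨⟨hx.1.1, fun c' hc' => hx.1.2 c' (h hc')⟩, hx.2⟩

lemma card_satExt_eq_card_insert_add (c : Φ.C) (S : Finset Φ.C) :
    #(Φ.satExt X S) = #(Φ.satExt X (insert c S)) + #(Φ.violExt X c S) := by
  rw [satExt_insert, violExt, card_filter_add_card_filter_not]

lemma extensions_nonempty : (Φ.extensions X).Nonempty := by
  have : ∀ v, Nonempty (Φ.Q v) := fun v => Fintype.card_pos_iff.1 (by linarith [Φ.card_two v])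
  refine ⟨fun v => match X v with
    | PVal.val a => a
    | _ => Classical.arbitrary _, ?_⟩
  simp only [extensions, mem_filter, mem_univ, true_and]
  intro v a hv
  simp only [hv]

lemma piecewise_mem_extensions (T : Finset V) :
    ∀ x ∈ Φ.extensions X, ∀ y ∈ Φ.extensions X, T.piecewise x y ∈ Φ.extensions X := by
  intro x hx y hy
  simp only [extensions, mem_filter, mem_univ, true_and] at hx hy ⊢
  intro v a hv
  by_cases hvT : v ∈ T
  · rw [piecewise_eq_of_mem _ _ _ hvT, hx v a hv]
  · rw [piecewise_eq_of_notMem _ _ _ hvT, hy v a hv]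

lemma card_violExt_mul_card_extensions {c : Φ.C} {S : Finset Φ.C}
    (hS : ∀ c' ∈ S, Disjoint (Φ.vbl c) (Φ.vbl c')) :
    #(Φ.violExt X c S) * #(Φ.extensions X) = #(Φ.violExt X c ∅) * #(Φ.satExt X S) := by
  have h := card_filter_and_mul_card_eq (Φ.vbl c) (Φ.piecewise_mem_extensions X (Φ.vbl c))
    (P := fun x => ¬ Φ.sat c x) (R := fun x => ∀ c' ∈ S, Φ.sat c' x)
    (fun x y hxy hx hy => hx (Φ.sat_local c y x (fun v hv => (hxy v hv).symm) hy))
    (fun x y hxy hx c' hc' => Φ.sat_local c' x y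
      (fun v hv => hxy v (disjoint_right.1 (hS c' hc') hv)) (hx c' hc'))
  rw [violExt, violExt, satExt_empty, satExt, filter_filter, ← h]
  simp_rw [and_comm]

lemma card_filter_inter_nonempty_le_degree {c : Φ.C} {S : Finset Φ.C} (hc : c ∉ S) :
    #(S.filter fun c' => (Φ.vbl c ∩ Φ.vbl c').Nonempty) ≤ Φ.degree := by
  refine le_trans (card_le_card fun c' hc' => ?_)
    (le_sup (f := fun c : Φ.C => #(univ.filter fun c' : Φ.C =>
      c' ≠ c ∧ (Φ.vbl c ∩ Φ.vbl c').Nonempty)) (mem_univ c))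
  rw [mem_filter] at hc' ⊢
  exact ⟨mem_univ _, fun h => hc (h ▸ hc'.1), hc'.2⟩

variable {ε p : ℝ}

lemma one_sub_mul_card_satExt_le_insert (hε : 0 ≤ ε) {c : Φ.C} {S : Finset Φ.C}
    (hc : c ∉ S → (#(Φ.violExt X c S) : ℝ) ≤ ε * #(Φ.satExt X S)) :
    (1 - ε) * #(Φ.satExt X S) ≤ #(Φ.satExt X (insert c S)) := by
  by_cases hcS : c ∈ S
  · rw [insert_eq_of_mem hcS]
    nlinarith [(#(Φ.satExt X S)).cast_nonneg (α := ℝ)]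
  · have h : (#(Φ.satExt X S) : ℝ) = #(Φ.satExt X (insert c S)) + #(Φ.violExt X c S) := by
      exact_mod_cast Φ.card_satExt_eq_card_insert_add X c S
    linarith [hc hcS]

lemma one_sub_pow_mul_card_satExt_le (hε0 : 0 ≤ ε) (hε1 : ε ≤ 1) (T U : Finset Φ.C)
    (hB : ∀ S ⊂ T ∪ U, ∀ c ∉ S, (#(Φ.violExt X c S) : ℝ) ≤ ε * #(Φ.satExt X S)) :
    (1 - ε) ^ #U * #(Φ.satExt X T) ≤ #(Φ.satExt X (T ∪ U)) := by
  induction U using Finset.induction_on with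
  | empty => simp
  | @insert c U hcU ih =>
    rw [union_insert] at hB ⊢
    have hsub : ∀ S ⊂ T ∪ U, S ⊂ insert c (T ∪ U) :=
      fun S hS => hS.trans_subset (subset_insert c _)
    calc (1 - ε) ^ #(insert c U) * #(Φ.satExt X T)
        = (1 - ε) * ((1 - ε) ^ #U * #(Φ.satExt X T)) := by rw [card_insert_of_notMem hcU]; ring
      _ ≤ (1 - ε) * #(Φ.satExt X (T ∪ U)) :=
        mul_le_mul_of_nonneg_left (ih fun S hS => hB S (hsub S hS)) (by linarith)
      _ ≤ #(Φ.satExt X (insert c (T ∪ U))) :=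
        Φ.one_sub_mul_card_satExt_le_insert X hε0 fun hc => hB _ (ssubset_insert hc) c hc

lemma card_violExt_le_of_disjoint (hV : ∀ c, (#(Φ.violExt X c ∅) : ℝ) ≤ p * #(Φ.extensions X))
    {c : Φ.C} {S : Finset Φ.C} (hS : ∀ c' ∈ S, Disjoint (Φ.vbl c) (Φ.vbl c')) :
    (#(Φ.violExt X c S) : ℝ) ≤ p * #(Φ.satExt X S) := by
  have hpos : (0 : ℝ) < #(Φ.extensions X) := by exact_mod_cast (Φ.extensions_nonempty X).card_pos
  have h : (#(Φ.violExt X c S) : ℝ) * #(Φ.extensions X)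
      = #(Φ.violExt X c ∅) * #(Φ.satExt X S) := by
    exact_mod_cast Φ.card_violExt_mul_card_extensions X hS
  refine le_of_mul_le_mul_right ?_ hpos
  rw [h, mul_right_comm]
  exact mul_le_mul_of_nonneg_right (hV c) (Nat.cast_nonneg _)

lemma card_violExt_le (hε0 : 0 ≤ ε) (hε1 : ε ≤ 1) (hp : p ≤ ε * (1 - ε) ^ Φ.degree)
    (hV : ∀ c, (#(Φ.violExt X c ∅) : ℝ) ≤ p * #(Φ.extensions X)) (S : Finset Φ.C) :
    ∀ c ∉ S, (#(Φ.violExt X c S) : ℝ) ≤ ε * #(Φ.satExt X S) := by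
  induction S using Finset.strongInduction with | H S ih => ?_
  intro c hc
  set near := S.filter fun c' => (Φ.vbl c ∩ Φ.vbl c').Nonempty
  set far := S.filter fun c' => ¬ (Φ.vbl c ∩ Φ.vbl c').Nonempty
  have hS : far ∪ near = S := by rw [union_comm]; exact filter_union_filter_not_eq _ S
  have hfar : (#(Φ.violExt X c far) : ℝ) ≤ p * #(Φ.satExt X far) :=
    Φ.card_violExt_le_of_disjoint X hV fun c' hc' => disjoint_iff_inter_eq_empty.2
      (not_nonempty_iff_eq_empty.1 (mem_filter.1 hc').2)
  have hchain : (1 - ε) ^ #near * #(Φ.satExt X far) ≤ #(Φ.satExt X S) := by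
    have := Φ.one_sub_pow_mul_card_satExt_le X hε0 hε1 far near (hS ▸ ih)
    rwa [hS] at this
  have hpow : (1 - ε) ^ Φ.degree ≤ (1 - ε) ^ #near :=
    pow_le_pow_of_le_one (by linarith) (by linarith) (Φ.card_filter_inter_nonempty_le_degree hc)
  calc (#(Φ.violExt X c S) : ℝ)
      ≤ #(Φ.violExt X c far) := by
        exact_mod_cast card_le_card (Φ.violExt_antitone X c (filter_subset _ S))
    _ ≤ p * #(Φ.satExt X far) := hfar
    _ ≤ ε * ((1 - ε) ^ #near * #(Φ.satExt X far)) := by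
        rw [← mul_assoc]
        exact mul_le_mul_of_nonneg_right (hp.trans (by gcongr)) (Nat.cast_nonneg _)
    _ ≤ ε * #(Φ.satExt X S) := mul_le_mul_of_nonneg_left hchain hε0

lemma one_sub_pow_card_mul_card_extensions_le (hε0 : 0 ≤ ε) (hε1 : ε ≤ 1)
    (hp : p ≤ ε * (1 - ε) ^ Φ.degree)
    (hV : ∀ c, (#(Φ.violExt X c ∅) : ℝ) ≤ p * #(Φ.extensions X)) :
    (1 - ε) ^ Fintype.card Φ.C * #(Φ.extensions X) ≤ #(Φ.satExt X univ) := by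
  have h := Φ.one_sub_pow_mul_card_satExt_le X hε0 hε1 ∅ univ
    fun S _ => Φ.card_violExt_le X hε0 hε1 hp hV S
  rwa [empty_union, card_univ, satExt_empty] at h

lemma ncard_agrees : {x | Φ.agrees X x}.ncard = #(Φ.extensions X) := by
  rw [← Set.ncard_coe_finset]
  congr 1
  ext x
  simp [extensions]

lemma condProb_viol (c : Φ.C) :
    Φ.condProb (Φ.viol c) X = #(Φ.violExt X c ∅) / #(Φ.extensions X) := by
  rw [condProb, ncard_agrees, ← Set.ncard_coe_finset (Φ.violExt X c ∅)]
  congr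
  ext x
  simp [violExt, satExt, extensions, viol, and_comm]

lemma ncard_sat_inter_agrees : (Φ.Sat ∩ {x | Φ.agrees X x}).ncard = #(Φ.satExt X univ) := by
  rw [← Set.ncard_coe_finset]
  congr 1
  ext x
  simp [satExt, extensions, Sat, and_comm]

end CSP

theorem statement7_general {V : Type} [Fintype V] [DecidableEq V] (Φ : CSP V)
    (p' : ℝ) (hp' : p' ∈ Set.Ioo (0 : ℝ) 1)
    (hlll : Real.exp 1 * p' * (Φ.qmax : ℝ) * ((Φ.degree : ℝ) + 1) < 1)
    (X : Φ.PAssign)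
    (hcond : ∀ c, Φ.condProb (Φ.viol c) X ≤ p' * (Φ.qmax : ℝ)) :
    (1 - Real.exp 1 * p' * (Φ.qmax : ℝ)) ^ (Fintype.card Φ.C)
      ≤ ((Φ.Sat ∩ {x | Φ.agrees X x}).ncard : ℝ) /
          (({x : Φ.Assign | Φ.agrees X x}).ncard : ℝ) := by
  set p := p' * (Φ.qmax : ℝ)
  have hp0 : 0 ≤ p := mul_nonneg hp'.1.le (Nat.cast_nonneg _)
  have hε : exp 1 * p' * Φ.qmax = exp 1 * p := mul_assoc _ _ _
  rw [hε] at hlll ⊢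
  have hε0 : 0 ≤ exp 1 * p := by positivity
  have hε1 : exp 1 * p ≤ 1 := by nlinarith [Φ.degree.cast_nonneg (α := ℝ)]
  have hp : p ≤ exp 1 * p * (1 - exp 1 * p) ^ Φ.degree := by
    calc p ≤ p * (exp 1 * (1 - exp 1 * p) ^ Φ.degree) :=
          le_mul_of_one_le_right hp0 (one_le_exp_one_mul_one_sub_pow hε0 hlll)
      _ = exp 1 * p * (1 - exp 1 * p) ^ Φ.degree := by ring
  have hV : ∀ c, (#(Φ.violExt X c ∅) : ℝ) ≤ p * #(Φ.extensions X) := fun c => by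
    have := hcond c
    rwa [Φ.condProb_viol, div_le_iff₀ (by exact_mod_cast (Φ.extensions_nonempty X).card_pos)] at this
  rw [Φ.ncard_sat_inter_agrees, Φ.ncard_agrees,
    le_div_iff₀ (by exact_mod_cast (Φ.extensions_nonempty X).card_pos)]
  exact Φ.one_sub_pow_card_mul_card_extensions_le X hε0 hε1 hp hV

/-- If `e·p'·q·(Δ+1) < 1` and the partial assignment `X` (taking no `⋆` values) satisfies
`ℙ[¬c | X] ≤ p'·q` for all `c`, then the fraction of full assignments extending `X` that
are satisfying is at least `(1 − e·p'·q)^{|𝒞|}`. -/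
theorem statement7 {V : Type} [Fintype V] [DecidableEq V] (Φ : CSP V)
    (p' : ℝ) (hp' : p' ∈ Set.Ioo (0 : ℝ) 1)
    (hlll : Real.exp 1 * p' * (Φ.qmax : ℝ) * ((Φ.degree : ℝ) + 1) < 1)
    (X : Φ.PAssign) (hX : ∀ v, X v ≠ PVal.star)
    (hcond : ∀ c, Φ.condProb (Φ.viol c) X ≤ p' * (Φ.qmax : ℝ)) :
    (1 - Real.exp 1 * p' * (Φ.qmax : ℝ)) ^ (Fintype.card Φ.C)
      ≤ ((Φ.Sat ∩ {x | Φ.agrees X x}).ncard : ℝ) /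
          (({x : Φ.Assign | Φ.agrees X x}).ncard : ℝ) :=
  statement7_general Φ p' hp' hlll X hcond
end

section
/- Let Φ = (V, 𝒬, 𝒞) be a CSP formula with threshold p' ∈ (0,1) and a fixed ordering v_1, …, v_n of V, and let X be a partial assignment with u := var(X) ≠ ⊥. Then for every a ∈ Q_u ∪ {⋆}, setting Y := X_{u←a}, one has C_rec(X) ⊆ C_rec(Y), C_fix(X) ⊆ C_fix(Y), C_frozen(X) ⊆ C_frozen(Y), C_⋆(X) ⊆ C_⋆(Y), C_⋆frozen(X) ⊆ C_⋆frozen(Y), and C_bad(X) ⊆ C_bad(Y). -/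
open Finset

namespace CSP

variable {V : Type} [Fintype V] [DecidableEq V] (Φ : CSP V) (p' : ℝ)

/-- `C_frozen(σ)` : the set of `σ`-frozen constraints, i.e. those with
`ℙ[¬c | σ] > p'`. -/
def Cfrozen (σ : Φ.PAssign) : Set Φ.C := {c | p' < Φ.condProb (Φ.viol c) σ}

/-- `V_fix(σ) = Λ⁺(σ) ∪ ⋃_{c ∈ C_frozen(σ)} vbl(c)` : the set of `σ`-fixed variables. -/
def Vfix (σ : Φ.PAssign) : Set V :=
  {v | σ v ≠ PVal.unacc} ∪ ⋃ c ∈ Φ.Cfrozen p' σ, (Φ.vbl c : Set V)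

/-- `C_fix(σ)` : constraints not yet satisfied by `σ` all of whose variables are
`σ`-fixed. -/
def Cfix (σ : Φ.PAssign) : Set Φ.C :=
  {c | (Φ.vbl c : Set V) ⊆ Φ.Vfix p' σ ∧ 0 < Φ.condProb (Φ.viol c) σ}

/-- A chain of constraints `cs 0, …, cs n` witnessing `⋆`-influence: it starts at a
constraint containing a `⋆`-variable, all but possibly the last lie in `C_fix(σ)`, and
consecutive constraints overlap on an unassigned variable. -/
def StarChain (σ : Φ.PAssign) (n : ℕ) (cs : ℕ → Φ.C) : Prop :=
  (∃ u, σ u = PVal.star ∧ u ∈ Φ.vbl (cs 0)) ∧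
  (∀ j < n, cs j ∈ Φ.Cfix p' σ) ∧
  (∀ j < n, ∃ w ∈ Φ.vbl (cs j) ∩ Φ.vbl (cs (j + 1)), ¬ Φ.assigned σ w)

/-- `C_⋆(σ)` : constraints reachable by a `⋆`-influence chain. -/
def Cstar (σ : Φ.PAssign) : Set Φ.C :=
  {c | ∃ n cs, Φ.StarChain p' σ n cs ∧ cs n = c}

/-- `V_⋆(σ)` : the set of `⋆`-influenced variables. -/
def Vstar (σ : Φ.PAssign) : Set V :=
  {w | ∃ n cs, Φ.StarChain p' σ n cs ∧ w ∈ Φ.vbl (cs n)}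

/-- `∂V_⋆(σ) = V_⋆(σ) ∖ V_fix(σ)` : the candidate set for `var(σ)`;
`var(σ) = ⊥` precisely when this set is empty. -/
def varSet (σ : Φ.PAssign) : Set V := Φ.Vstar p' σ \ Φ.Vfix p' σ

/-- `var(σ) = u` : `u` is the smallest element (in the fixed ordering of the
variables) of `V_⋆(σ) ∖ V_fix(σ)`. -/
def IsVar [LinearOrder V] (σ : Φ.PAssign) (u : V) : Prop :=
  u ∈ Φ.varSet p' σ ∧ ∀ w ∈ Φ.varSet p' σ, u ≤ w

/-- `C_rec(σ)` : constraints containing a `⋆`-variable. -/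
def Crec (σ : Φ.PAssign) : Set Φ.C := {c | ∃ v ∈ Φ.vbl c, σ v = PVal.star}

/-- `C_⋆frozen(σ) = C_frozen(σ) ∩ C_⋆(σ)`. -/
def CstarFrozen (σ : Φ.PAssign) : Set Φ.C := Φ.Cfrozen p' σ ∩ Φ.Cstar p' σ

/-- `C_bad(σ) = C_rec(σ) ∪ C_⋆frozen(σ)`. -/
def Cbad (σ : Φ.PAssign) : Set Φ.C := Φ.Crec σ ∪ Φ.CstarFrozen p' σ

/-- `𝒞^X_v` : the constraints of the connected component containing `v` of `Φ`
simplified under `X`. -/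
def CompCons (X : Φ.PAssign) (v : V) : Set Φ.C :=
  {c | ∃ (t : ℕ) (cs : ℕ → Φ.C), cs t = c ∧ v ∈ Φ.vbl (cs 0) ∧
    (∀ j ≤ t, 0 < Φ.condProb (Φ.viol (cs j)) X) ∧
    (∀ j < t, ∃ w ∈ Φ.vbl (cs j) ∩ Φ.vbl (cs (j + 1)), ¬ Φ.assigned X w)}

/-- A var-guided sequence of partial assignments: at each step `i < ℓ`, the next
partial assignment is obtained by giving the variable `var(X_i) ≠ ⊥` a value in
`Q_{var(X_i)} ∪ {⋆}`. -/
def VarGuided [LinearOrder V] (X : ℕ → Φ.PAssign) (ℓ : ℕ) : Prop :=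
  ∀ i < ℓ, ∃ (u : V) (a : PVal (Φ.Q u)), a ≠ PVal.unacc ∧
    Φ.IsVar p' (X i) u ∧ X (i + 1) = Function.update (X i) u a

end CSP

/-!
A variable `u = var(X)` lies outside `V_fix(X)`, so `X u = ☆` and `u` occurs in no `X`-frozen
constraint and in no constraint of `C_fix(X)`. Conditional probabilities of events not depending
on `u` are unchanged when `u` is fixed to a value or to `⋆`: the conditioning set and the event are
both products with `Q_u`, so fixing `u` divides both counts by `|Q_u|`. Hence frozenness, `V_fix`
and `C_fix` can only grow. A `⋆`-chain for `X` links its constraints through variables of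
`C_fix(X)`-constraints, which are never `u`, so it remains a `⋆`-chain for `Y`.
-/

namespace CSP

variable {V : Type} [Fintype V] [DecidableEq V] (Φ : CSP V)

lemma ncard_eq_card_mul_ncard_slice {u : V} (S : Set Φ.Assign)
    (hS : ∀ x ∈ S, ∀ q : Φ.Q u, Function.update x u q ∈ S) (b : Φ.Q u) :
    S.ncard = Fintype.card (Φ.Q u) * (S ∩ {x | x u = b}).ncard := by
  let e : S ≃ Φ.Q u × (S ∩ {x | x u = b} : Set Φ.Assign) :=
    { toFun := fun x => ⟨x.1 u, Function.update x.1 u b, hS x.1 x.2 b, Function.update_self ..⟩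
      invFun := fun p => ⟨Function.update p.2.1 u p.1, hS _ p.2.2.1 _⟩
      left_inv := fun x => Subtype.ext (by simp)
      right_inv := fun ⟨q, y, hy⟩ => by
        refine Prod.ext (by simp) (Subtype.ext ?_)
        show Function.update (Function.update y u q) u b = y
        rw [Function.update_idem, ← hy.2, Function.update_eq_self] }
  rw [← Nat.card_coe_set_eq, Nat.card_congr e, Nat.card_prod, Nat.card_eq_fintype_card,
    Nat.card_coe_set_eq]

section Update

variable {Φ} {σ : Φ.PAssign} {u : V}

lemma agrees_update_star (hσ : σ u = .unacc) (x : Φ.Assign) :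
    Φ.agrees (Function.update σ u .star) x ↔ Φ.agrees σ x := by
  refine forall_congr' fun v => forall_congr' fun b => ?_
  rcases eq_or_ne v u with rfl | hvu
  · simp [hσ]
  · rw [Function.update_of_ne hvu]

lemma agrees_update_val (hσ : σ u = .unacc) (b : Φ.Q u) (x : Φ.Assign) :
    Φ.agrees (Function.update σ u (.val b)) x ↔ Φ.agrees σ x ∧ x u = b := by
  constructor
  · intro h
    refine ⟨fun v a hva => ?_, h u b (Function.update_self ..)⟩
    obtain hvu : v ≠ u := by rintro rfl; simp [hσ] at hva
    exact h v a (by rwa [Function.update_of_ne hvu])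
  · rintro ⟨h, rfl⟩ v a hva
    rcases eq_or_ne v u with rfl | hvu
    · rw [Function.update_self, PVal.val.injEq] at hva
      exact hva
    · exact h v a (by rwa [Function.update_of_ne hvu] at hva)

lemma agrees_update_assign (hσ : σ u = .unacc) {x : Φ.Assign} (h : Φ.agrees σ x)
    (q : Φ.Q u) : Φ.agrees σ (Function.update x u q) := by
  intro v a hva
  obtain hvu : v ≠ u := by rintro rfl; simp [hσ] at hva
  rw [Function.update_of_ne hvu]
  exact h v a hva

lemma condProb_update_of_unacc (hσ : σ u = .unacc) {A : Set Φ.Assign}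
    (hA : ∀ x ∈ A, ∀ q : Φ.Q u, Function.update x u q ∈ A)
    {a : PVal (Φ.Q u)} (ha : a ≠ .unacc) :
    Φ.condProb A (Function.update σ u a) = Φ.condProb A σ := by
  unfold condProb
  cases a with
  | unacc => exact absurd rfl ha
  | star => simp only [agrees_update_star hσ]
  | val b =>
    have hslice : {x : Φ.Assign | Φ.agrees (Function.update σ u (.val b)) x}
        = {x | Φ.agrees σ x} ∩ {x | x u = b} :=
      Set.ext fun x => agrees_update_val hσ b x
    have hnum := Φ.ncard_eq_card_mul_ncard_slice (A ∩ {x | Φ.agrees σ x})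
      (fun x hx q => ⟨hA x hx.1 q, agrees_update_assign hσ hx.2 q⟩) b
    have hden := Φ.ncard_eq_card_mul_ncard_slice {x : Φ.Assign | Φ.agrees σ x}
      (fun x hx q => agrees_update_assign hσ hx q) b
    have hq : (Fintype.card (Φ.Q u) : ℝ) ≠ 0 := by
      have := Φ.card_two u
      positivity
    rw [hslice, ← Set.inter_assoc, hnum, hden, Nat.cast_mul, Nat.cast_mul,
      mul_div_mul_left _ _ hq]

lemma update_mem_viol {c : Φ.C} (hc : u ∉ Φ.vbl c) {x : Φ.Assign} (hx : x ∈ Φ.viol c)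
    (q : Φ.Q u) : Function.update x u q ∈ Φ.viol c := fun hsat =>
  hx <| Φ.sat_local c _ x (fun v hv => Function.update_of_ne (by rintro rfl; exact hc hv) ..) hsat

lemma condProb_viol_update (hσ : σ u = .unacc) {c : Φ.C} (hc : u ∉ Φ.vbl c)
    {a : PVal (Φ.Q u)} (ha : a ≠ .unacc) :
    Φ.condProb (Φ.viol c) (Function.update σ u a) = Φ.condProb (Φ.viol c) σ :=
  condProb_update_of_unacc hσ (fun _ hx q => update_mem_viol hc hx q) ha

lemma Crec_subset_update (hσ : σ u ≠ .star) (a : PVal (Φ.Q u)) :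
    Φ.Crec σ ⊆ Φ.Crec (Function.update σ u a) := by
  rintro c ⟨v, hv, hvs⟩
  obtain hvu : v ≠ u := by rintro rfl; exact hσ hvs
  exact ⟨v, hv, by rwa [Function.update_of_ne hvu]⟩

variable {p' : ℝ} (hu : u ∉ Φ.Vfix p' σ) {a : PVal (Φ.Q u)} (ha : a ≠ .unacc)
include hu

lemma unacc_of_notMem_Vfix : σ u = .unacc :=
  not_not.mp fun h => hu (Or.inl h)

lemma notMem_vbl_of_mem_Cfrozen {c : Φ.C} (hc : c ∈ Φ.Cfrozen p' σ) : u ∉ Φ.vbl c :=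
  fun huc => hu (Or.inr (Set.mem_biUnion hc huc))

lemma notMem_vbl_of_mem_Cfix {c : Φ.C} (hc : c ∈ Φ.Cfix p' σ) : u ∉ Φ.vbl c :=
  fun huc => hu (hc.1 huc)

include ha

lemma Cfrozen_subset_update : Φ.Cfrozen p' σ ⊆ Φ.Cfrozen p' (Function.update σ u a) :=
  fun c hc => by
    show p' < _
    rwa [condProb_viol_update (unacc_of_notMem_Vfix hu) (notMem_vbl_of_mem_Cfrozen hu hc) ha]

lemma Vfix_subset_update : Φ.Vfix p' σ ⊆ Φ.Vfix p' (Function.update σ u a) := by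
  rintro v (hv | hv)
  · left
    rcases eq_or_ne v u with rfl | hvu
    · simpa using ha
    · simpa [Function.update_of_ne hvu] using hv
  · right
    simp only [Set.mem_iUnion] at hv ⊢
    obtain ⟨c, hc, hvc⟩ := hv
    exact ⟨c, Cfrozen_subset_update hu ha hc, hvc⟩

lemma Cfix_subset_update : Φ.Cfix p' σ ⊆ Φ.Cfix p' (Function.update σ u a) := fun c hc =>
  ⟨hc.1.trans (Vfix_subset_update hu ha), by
    rw [condProb_viol_update (unacc_of_notMem_Vfix hu) (notMem_vbl_of_mem_Cfix hu hc) ha]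
    exact hc.2⟩

lemma starChain_update {n : ℕ} {cs : ℕ → Φ.C} (h : Φ.StarChain p' σ n cs) :
    Φ.StarChain p' (Function.update σ u a) n cs := by
  obtain ⟨⟨v, hvs, hv⟩, hfix, hlink⟩ := h
  have hσu := unacc_of_notMem_Vfix hu
  refine ⟨⟨v, ?_, hv⟩, fun j hj => Cfix_subset_update hu ha (hfix j hj), fun j hj => ?_⟩
  · obtain hvu : v ≠ u := by rintro rfl; simp [hσu] at hvs
    rwa [Function.update_of_ne hvu]
  · obtain ⟨w, hw, hwn⟩ := hlink j hj
    obtain hwu : w ≠ u := by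
      rintro rfl; exact notMem_vbl_of_mem_Cfix hu (hfix j hj) (Finset.mem_inter.mp hw).1
    refine ⟨w, hw, fun ⟨b, hb⟩ => hwn ⟨b, ?_⟩⟩
    rwa [Function.update_of_ne hwu] at hb

lemma Cstar_subset_update : Φ.Cstar p' σ ⊆ Φ.Cstar p' (Function.update σ u a) :=
  fun _ ⟨n, cs, hchain, hc⟩ => ⟨n, cs, starChain_update hu ha hchain, hc⟩

lemma CstarFrozen_subset_update :
    Φ.CstarFrozen p' σ ⊆ Φ.CstarFrozen p' (Function.update σ u a) :=
  Set.inter_subset_inter (Cfrozen_subset_update hu ha) (Cstar_subset_update hu ha)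

lemma Cbad_subset_update : Φ.Cbad p' σ ⊆ Φ.Cbad p' (Function.update σ u a) :=
  Set.union_subset_union
    (Crec_subset_update (by simp [unacc_of_notMem_Vfix hu]) a)
    (CstarFrozen_subset_update hu ha)

end Update

end CSP

theorem statement10_general {V : Type} [LinearOrder V] [Fintype V] (Φ : CSP V)
    (p' : ℝ)
    (X : Φ.PAssign) (u : V) (hu : Φ.IsVar p' X u)
    (a : PVal (Φ.Q u)) (ha : a ≠ PVal.unacc) :
    Φ.Crec X ⊆ Φ.Crec (Function.update X u a) ∧
    Φ.Cfix p' X ⊆ Φ.Cfix p' (Function.update X u a) ∧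
    Φ.Cfrozen p' X ⊆ Φ.Cfrozen p' (Function.update X u a) ∧
    Φ.Cstar p' X ⊆ Φ.Cstar p' (Function.update X u a) ∧
    Φ.CstarFrozen p' X ⊆ Φ.CstarFrozen p' (Function.update X u a) ∧
    Φ.Cbad p' X ⊆ Φ.Cbad p' (Function.update X u a) := by
  have hVfix : u ∉ Φ.Vfix p' X := hu.1.2
  exact ⟨CSP.Crec_subset_update (by simp [CSP.unacc_of_notMem_Vfix hVfix]) a,
    CSP.Cfix_subset_update hVfix ha, CSP.Cfrozen_subset_update hVfix ha,
    CSP.Cstar_subset_update hVfix ha, CSP.CstarFrozen_subset_update hVfix ha,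
    CSP.Cbad_subset_update hVfix ha⟩

/-- **Monotonicity under extending at `var(X)`.**
If `u = var(X) ≠ ⊥` and `Y = X_{u←a}` for some `a ∈ Q_u ∪ {⋆}`, then each of the sets
`C_rec`, `C_fix`, `C_frozen`, `C_⋆`, `C_⋆frozen` and `C_bad` of `X` is contained in the
corresponding set of `Y`. -/
theorem statement10 {V : Type} [LinearOrder V] [Fintype V] (Φ : CSP V)
    (p' : ℝ) (hp' : p' ∈ Set.Ioo (0 : ℝ) 1)
    (X : Φ.PAssign) (u : V) (hu : Φ.IsVar p' X u)
    (a : PVal (Φ.Q u)) (ha : a ≠ PVal.unacc) :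
    Φ.Crec X ⊆ Φ.Crec (Function.update X u a) ∧
    Φ.Cfix p' X ⊆ Φ.Cfix p' (Function.update X u a) ∧
    Φ.Cfrozen p' X ⊆ Φ.Cfrozen p' (Function.update X u a) ∧
    Φ.Cstar p' X ⊆ Φ.Cstar p' (Function.update X u a) ∧
    Φ.CstarFrozen p' X ⊆ Φ.CstarFrozen p' (Function.update X u a) ∧
    Φ.Cbad p' X ⊆ Φ.Cbad p' (Function.update X u a) :=
  statement10_general Φ p' X u hu a ha
end

section
/- Let Φ = (V, 𝒬, 𝒞) be a CSP formula with threshold p' ∈ (0,1) and a fixed ordering of V, and let X be a partial assignment with exactly one variable v satisfying X(v) = ⋆ and with var(X) = ⊥. Then 𝒞^X_v ⊆ C_⋆(X). -/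
open Finset

/-- If `X` has exactly one `⋆`-variable `v` and `var(X) = ⊥` (i.e. `V_⋆(X) ∖ V_fix(X)`
is empty), then `𝒞^X_v ⊆ C_⋆(X)`. -/
theorem statement14 {V : Type} [LinearOrder V] [Fintype V] (Φ : CSP V)
    (p' : ℝ) (hp' : p' ∈ Set.Ioo (0 : ℝ) 1)
    (X : Φ.PAssign) (v : V) (hstar : ∀ w, X w = PVal.star ↔ w = v)
    (hvar : Φ.varSet p' X = ∅) :
    Φ.CompCons X v ⊆ Φ.Cstar p' X := by
  intro c hc
  obtain ⟨t, cs, hcst, hv0, hpos, hconn⟩ := hc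
  have hVsub : Φ.Vstar p' X ⊆ Φ.Vfix p' X := by
    intro w hw
    by_contra hwf
    have := Set.eq_empty_iff_forall_notMem.mp hvar w
    exact this ⟨hw, hwf⟩
  have key : ∀ n ≤ t, Φ.StarChain p' X n cs := by
    intro n hn
    induction n with
    | zero =>
      exact ⟨⟨v, (hstar v).mpr rfl, hv0⟩,
        fun j hj => absurd hj (Nat.not_lt_zero j),
        fun j hj => absurd hj (Nat.not_lt_zero j)⟩
    | succ m ih =>
      have hm := ih (le_of_lt (lt_of_lt_of_le (Nat.lt_succ_self m) hn))
      refine ⟨hm.1, ?_, ?_⟩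
      · intro j hj
        rcases Nat.lt_succ_iff_lt_or_eq.mp hj with h | h
        · exact hm.2.1 j h
        · subst h
          refine ⟨?_, hpos j (by omega)⟩
          intro w hw
          exact hVsub ⟨j, cs, hm, hw⟩
      · intro j hj
        exact hconn j (by omega)
  exact ⟨t, cs, key t le_rfl, hcst⟩
end

section
/- Let Φ = (V, 𝒬, 𝒞) be a CSP formula in which every domain has the same size q, with threshold p' ∈ (0,1), parameter θ ∈ (0, 1/q), integers L ≥ L' ≥ 0, and constants d, k, Δ as given. For a constraint c ∈ 𝒞 and a partial assignment X define F_X(c) := (q+1)·k·(1−qθ)/(2−qθ) + (q+1)·ℙ[¬c | X]·(1−e·p'·q)^{−dk}/p', and for T ⊆ 𝒞 define F_X(T) := ∏_{c∈T} F_X(c); let 𝒯^i_v be the set of {2,3}-trees T of G(𝒞) with T ∩ 𝒞_v ≠ ∅ and |T| = i, and define F(X) := Σ_{v∈V} Σ_{i=L'}^{L+1} (2−qθ)^{(i+1)·kΔ²} Σ_{T∈𝒯^i_v} F_X(T ∖ 𝒞_v). Then for every partial assignment X and every variable u with X(u) = ☆ one has Σ_{a∈Q_u} F(X_{u←a}) =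 q·F(X), and moreover Σ_{a∈Q_u∪{⋆}} F(X_{u←a}) = (q+1)·F(X). -/
open Finset

/-- A `{2,3}`-tree of a graph `G`. -/
def IsTwoThreeTree {α : Type} (G : SimpleGraph α) (T : Finset α) : Prop :=
  (∀ a ∈ T, ∀ b ∈ T, a ≠ b → 2 ≤ G.dist a b) ∧
  (SimpleGraph.fromRel fun a b : {x // x ∈ T} =>
      G.dist a.1 b.1 = 2 ∨ G.dist a.1 b.1 = 3).Connected

/-- The dependency graph `G(𝒞)`. -/
def CSP.depGraph {V : Type} [Fintype V] [DecidableEq V] (Φ : CSP V) : SimpleGraph Φ.C :=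
  SimpleGraph.fromRel fun c c' => ((Φ.vbl c) ∩ (Φ.vbl c')).Nonempty

open scoped Classical

/-- `F_X(c) = (q+1)·k·(1−qθ)/(2−qθ) + (q+1)·ℙ[¬c|X]·(1−e·p'·q)^{−dk}/p'`. -/
noncomputable def Fcons {V : Type} [Fintype V] [DecidableEq V] (Φ : CSP V)
    (p' θ : ℝ) (q d : ℕ) (X : Φ.PAssign) (c : Φ.C) : ℝ :=
  ((q : ℝ) + 1) * (Φ.width : ℝ) * (1 - (q : ℝ) * θ) / (2 - (q : ℝ) * θ)
    + ((q : ℝ) + 1) * Φ.condProb (Φ.viol c) X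
        * ((1 - Real.exp 1 * p' * (q : ℝ)) ^ (d * Φ.width))⁻¹ / p'

/-- `F_X(T) = ∏_{c∈T} F_X(c)`. -/
noncomputable def Ftree {V : Type} [Fintype V] [DecidableEq V] (Φ : CSP V)
    (p' θ : ℝ) (q d : ℕ) (X : Φ.PAssign) (T : Finset Φ.C) : ℝ :=
  ∏ c ∈ T, Fcons Φ p' θ q d X c

/-- The potential
`F(X) = Σ_{v∈V} Σ_{i=L'}^{L+1} (2−qθ)^{(i+1)·kΔ²} Σ_{T∈𝒯^i_v} F_X(T ∖ 𝒞_v)`,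
where `𝒯^i_v` is the set of `{2,3}`-trees `T` of `G(𝒞)` with `T ∩ 𝒞_v ≠ ∅` and `|T| = i`. -/
noncomputable def Fpot {V : Type} [Fintype V] [DecidableEq V] (Φ : CSP V)
    (p' θ : ℝ) (q d L L' : ℕ) (X : Φ.PAssign) : ℝ :=
  ∑ v : V, ∑ i ∈ Finset.Icc L' (L + 1),
    (2 - (q : ℝ) * θ) ^ ((i + 1) * Φ.width * Φ.degree ^ 2) *
      ∑ T : Finset Φ.C,
        if IsTwoThreeTree Φ.depGraph T ∧ (∃ c ∈ T, v ∈ Φ.vbl c) ∧ T.card = i then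
          Ftree Φ p' θ q d X (T.filter fun c => v ∉ Φ.vbl c)
        else 0


section AuxProof

open scoped Classical

variable {V : Type} [Fintype V] [DecidableEq V] {Φ : CSP V}

/-- Instance-free counting of assignments satisfying a predicate. -/
private noncomputable def cnt (Φ : CSP V) (P : Φ.Assign → Prop) : ℕ :=
  {x : Φ.Assign | P x}.ncard

private lemma cnt_eq_filter (P : Φ.Assign → Prop) :
    cnt Φ P = (Finset.univ.filter fun x => P x).card := by
  rw [cnt, Set.ncard_eq_toFinset_card', Set.toFinset_setOf]

private lemma cnt_congr {P Q : Φ.Assign → Prop} (h : ∀ x, P x ↔ Q x) :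
    cnt Φ P = cnt Φ Q := by
  unfold cnt
  congr 1
  exact Set.ext h

private lemma agrees_invariant {X : Φ.PAssign} {u : V} (hu : X u = PVal.unacc)
    (x : Φ.Assign) (b : Φ.Q u) (h : Φ.agrees X x) :
    Φ.agrees X (Function.update x u b) := by
  intro v a hva
  by_cases hv : v = u
  · subst hv; rw [hu] at hva; exact absurd hva (by simp)
  · rw [Function.update_of_ne hv]; exact h v a hva

private lemma agrees_update_val {X : Φ.PAssign} {u : V} (hu : X u = PVal.unacc)
    (a : Φ.Q u) (x : Φ.Assign) :
    Φ.agrees (Function.update X u (PVal.val a)) x ↔ Φ.agrees X x ∧ x u = a := by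
  constructor
  · intro h
    refine ⟨?_, h u a (by simp)⟩
    intro v b hvb
    by_cases hv : v = u
    · subst hv; rw [hu] at hvb; exact absurd hvb (by simp)
    · exact h v b (by rwa [Function.update_of_ne hv])
  · rintro ⟨h, hxu⟩ v b hvb
    by_cases hv : v = u
    · subst hv
      rw [Function.update_self] at hvb
      cases hvb
      exact hxu
    · rw [Function.update_of_ne hv] at hvb
      exact h v b hvb

private lemma agrees_update_star {X : Φ.PAssign} {u : V} (hu : X u = PVal.unacc)
    (x : Φ.Assign) :
    Φ.agrees (Function.update X u PVal.star) x ↔ Φ.agrees X x := by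
  constructor
  · intro h v b hvb
    by_cases hv : v = u
    · subst hv; rw [hu] at hvb; exact absurd hvb (by simp)
    · exact h v b (by rwa [Function.update_of_ne hv])
  · intro h v b hvb
    by_cases hv : v = u
    · subst hv; rw [Function.update_self] at hvb; exact absurd hvb (by simp)
    · rw [Function.update_of_ne hv] at hvb; exact h v b hvb

private lemma aux_fiber_card (u : V) (P : Φ.Assign → Prop)
    (hP : ∀ x (b : Φ.Q u), P x → P (Function.update x u b)) (a b : Φ.Q u) :
    cnt Φ (fun x => P x ∧ x u = a) = cnt Φ (fun x => P x ∧ x u = b) := by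
  rw [cnt_eq_filter, cnt_eq_filter]
  apply Finset.card_bij (fun x _ => Function.update x u b)
  · intro x hx
    simp only [Finset.mem_filter, Finset.mem_univ, true_and] at hx ⊢
    exact ⟨hP x b hx.1, Function.update_self ..⟩
  · intro x hx y hy h
    simp only [Finset.mem_filter, Finset.mem_univ, true_and] at hx hy
    funext v
    by_cases hv : v = u
    · subst hv; rw [hx.2, hy.2]
    · have := congrFun h v
      rwa [Function.update_of_ne hv, Function.update_of_ne hv] at this
  · intro y hy
    simp only [Finset.mem_filter, Finset.mem_univ, true_and] at hy
    refine ⟨Function.update y u a, ?_, ?_⟩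
    · simp only [Finset.mem_filter, Finset.mem_univ, true_and]
      exact ⟨hP y a hy.1, Function.update_self ..⟩
    · funext v
      by_cases hv : v = u
      · subst hv; simp [hy.2]
      · simp [Function.update_of_ne hv]

private lemma aux_fiber_sum (u : V) (P : Φ.Assign → Prop) :
    cnt Φ P = ∑ a : Φ.Q u, cnt Φ (fun x => P x ∧ x u = a) := by
  simp only [cnt_eq_filter]
  rw [Finset.card_eq_sum_card_fiberwise
        (f := fun x : Φ.Assign => x u) (t := Finset.univ) (fun _ _ => Finset.mem_univ _)]
  refine Finset.sum_congr rfl fun a _ => ?_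
  congr 1
  ext x
  simp

private lemma condProb_eq_cnt (A : Set Φ.Assign) (σ : Φ.PAssign) :
    Φ.condProb A σ
      = ((cnt Φ fun x => x ∈ A ∧ Φ.agrees σ x : ℕ) : ℝ)
        / ((cnt Φ fun x => Φ.agrees σ x : ℕ) : ℝ) := rfl

private lemma card_Qu_ne_zero (u : V) : ((Fintype.card (Φ.Q u) : ℝ)) ≠ 0 := by
  have := Φ.card_two u
  positivity

private lemma sum_condProb {X : Φ.PAssign} {u : V} (hu : X u = PVal.unacc)
    (A : Set Φ.Assign) :
    ∑ a : Φ.Q u, Φ.condProb A (Function.update X u (PVal.val a))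
      = (Fintype.card (Φ.Q u) : ℝ) * Φ.condProb A X := by
  obtain ⟨a₀⟩ : Nonempty (Φ.Q u) := Fintype.card_pos_iff.mp (by have := Φ.card_two u; omega)
  set D₀ : ℕ := cnt Φ (fun x => Φ.agrees X x ∧ x u = a₀) with hD₀
  have hDa : ∀ a : Φ.Q u, cnt Φ (fun x => Φ.agrees X x ∧ x u = a) = D₀ :=
    fun a => aux_fiber_card u _ (fun x b hx => agrees_invariant hu x b hx) a a₀
  have hD : cnt Φ (fun x => Φ.agrees X x) = Fintype.card (Φ.Q u) * D₀ := by
    rw [aux_fiber_sum u, Finset.sum_congr rfl fun a _ => hDa a, Finset.sum_const,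
      Finset.card_univ, smul_eq_mul]
  have hNsum : cnt Φ (fun x => x ∈ A ∧ Φ.agrees X x)
      = ∑ a : Φ.Q u, cnt Φ (fun x => (x ∈ A ∧ Φ.agrees X x) ∧ x u = a) :=
    aux_fiber_sum u _
  have hcp : ∀ a : Φ.Q u, Φ.condProb A (Function.update X u (PVal.val a))
      = ((cnt Φ (fun x => (x ∈ A ∧ Φ.agrees X x) ∧ x u = a) : ℕ) : ℝ) / (D₀ : ℝ) := by
    intro a
    rw [condProb_eq_cnt]
    congr 2
    · exact cnt_congr fun x => by
        simp only [agrees_update_val hu, and_assoc]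
    · rw [← hDa a]
      exact cnt_congr fun x => agrees_update_val hu a x
  rw [Finset.sum_congr rfl fun a _ => hcp a, ← Finset.sum_div, ← Nat.cast_sum, ← hNsum,
    condProb_eq_cnt, hD]
  push_cast
  rw [← mul_div_assoc, mul_div_mul_left _ _ (card_Qu_ne_zero u)]

private lemma condProb_update_of_notMem {X : Φ.PAssign} {u : V} (hu : X u = PVal.unacc)
    {c : Φ.C} (hc : u ∉ Φ.vbl c) (a : Φ.Q u) :
    Φ.condProb (Φ.viol c) (Function.update X u (PVal.val a))
      = Φ.condProb (Φ.viol c) X := by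
  obtain ⟨a₀⟩ : Nonempty (Φ.Q u) := Fintype.card_pos_iff.mp (by have := Φ.card_two u; omega)
  have hinv : ∀ (x : Φ.Assign) (b : Φ.Q u),
      x ∈ Φ.viol c → Function.update x u b ∈ Φ.viol c := by
    intro x b hx hsat
    refine hx (Φ.sat_local c _ x (fun v hv => ?_) hsat)
    refine Function.update_of_ne (fun h => hc ?_) _ _
    rwa [h] at hv
  have hinvP : ∀ (x : Φ.Assign) (b : Φ.Q u),
      (x ∈ Φ.viol c ∧ Φ.agrees X x) → (Function.update x u b ∈ Φ.viol c ∧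
        Φ.agrees X (Function.update x u b)) :=
    fun x b h => ⟨hinv x b h.1, agrees_invariant hu x b h.2⟩
  set D₀ : ℕ := cnt Φ (fun x => Φ.agrees X x ∧ x u = a₀) with hD₀
  set N₀ : ℕ := cnt Φ (fun x => (x ∈ Φ.viol c ∧ Φ.agrees X x) ∧ x u = a₀) with hN₀
  have hDa : ∀ b : Φ.Q u, cnt Φ (fun x => Φ.agrees X x ∧ x u = b) = D₀ :=
    fun b => aux_fiber_card u _ (fun x b hx => agrees_invariant hu x b hx) b a₀
  have hNa : ∀ b : Φ.Q u,
      cnt Φ (fun x => (x ∈ Φ.viol c ∧ Φ.agrees X x) ∧ x u = b) = N₀ :=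
    fun b => aux_fiber_card u _ hinvP b a₀
  have hD : cnt Φ (fun x => Φ.agrees X x) = Fintype.card (Φ.Q u) * D₀ := by
    rw [aux_fiber_sum u, Finset.sum_congr rfl fun b _ => hDa b, Finset.sum_const,
      Finset.card_univ, smul_eq_mul]
  have hN : cnt Φ (fun x => x ∈ Φ.viol c ∧ Φ.agrees X x)
      = Fintype.card (Φ.Q u) * N₀ := by
    rw [aux_fiber_sum u, Finset.sum_congr rfl fun b _ => hNa b, Finset.sum_const,
      Finset.card_univ, smul_eq_mul]
  rw [condProb_eq_cnt, condProb_eq_cnt, hD, hN]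
  have h1 : cnt Φ (fun x => x ∈ Φ.viol c ∧ Φ.agrees (Function.update X u (PVal.val a)) x)
      = N₀ := by
    rw [← hNa a]
    exact cnt_congr fun x => by simp only [agrees_update_val hu, and_assoc]
  have h2 : cnt Φ (fun x => Φ.agrees (Function.update X u (PVal.val a)) x) = D₀ := by
    rw [← hDa a]
    exact cnt_congr fun x => agrees_update_val hu a x
  rw [h1, h2]
  push_cast
  rw [mul_div_mul_left _ _ (card_Qu_ne_zero u)]

private lemma Fcons_update_of_notMem {X : Φ.PAssign} {u : V} (hu : X u = PVal.unacc)
    {c : Φ.C} (hc : u ∉ Φ.vbl c) (p' θ : ℝ) (q d : ℕ) (a : Φ.Q u) :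
    Fcons Φ p' θ q d (Function.update X u (PVal.val a)) c = Fcons Φ p' θ q d X c := by
  unfold Fcons
  rw [condProb_update_of_notMem hu hc a]

private lemma sum_Fcons {X : Φ.PAssign} {u : V} (hu : X u = PVal.unacc)
    (p' θ : ℝ) (q d : ℕ) (hqu : Fintype.card (Φ.Q u) = q) (c : Φ.C) :
    ∑ a : Φ.Q u, Fcons Φ p' θ q d (Function.update X u (PVal.val a)) c
      = (q : ℝ) * Fcons Φ p' θ q d X c := by
  unfold Fcons
  rw [Finset.sum_add_distrib, Finset.sum_const, Finset.card_univ, hqu, nsmul_eq_mul]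
  have h : ∀ a : Φ.Q u,
      ((q : ℝ) + 1) * Φ.condProb (Φ.viol c) (Function.update X u (PVal.val a))
          * ((1 - Real.exp 1 * p' * (q : ℝ)) ^ (d * Φ.width))⁻¹ / p'
        = Φ.condProb (Φ.viol c) (Function.update X u (PVal.val a))
          * (((q : ℝ) + 1) * ((1 - Real.exp 1 * p' * (q : ℝ)) ^ (d * Φ.width))⁻¹ / p') := by
    intro a; ring
  rw [Finset.sum_congr rfl fun a _ => h a, ← Finset.sum_mul, sum_condProb hu, hqu]
  ring

private lemma sum_Ftree {X : Φ.PAssign} {u : V} (hu : X u = PVal.unacc)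
    (p' θ : ℝ) (q d : ℕ) (hqu : Fintype.card (Φ.Q u) = q) (T : Finset Φ.C)
    (hT : ∀ c ∈ T, ∀ c' ∈ T, u ∈ Φ.vbl c → u ∈ Φ.vbl c' → c = c') :
    ∑ a : Φ.Q u, Ftree Φ p' θ q d (Function.update X u (PVal.val a)) T
      = (q : ℝ) * Ftree Φ p' θ q d X T := by
  by_cases hex : ∃ c ∈ T, u ∈ Φ.vbl c
  · obtain ⟨c₀, hc₀T, hc₀⟩ := hex
    have hrest : ∀ (a : Φ.Q u), ∀ c ∈ T.erase c₀,
        Fcons Φ p' θ q d (Function.update X u (PVal.val a)) c = Fcons Φ p' θ q d X c := by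
      intro a c hc
      refine Fcons_update_of_notMem hu (fun hmem => ?_) p' θ q d a
      exact (Finset.ne_of_mem_erase hc) (hT c (Finset.mem_of_mem_erase hc) c₀ hc₀T hmem hc₀)
    have hsplit : ∀ a : Φ.Q u,
        Ftree Φ p' θ q d (Function.update X u (PVal.val a)) T
          = Fcons Φ p' θ q d (Function.update X u (PVal.val a)) c₀
            * ∏ c ∈ T.erase c₀, Fcons Φ p' θ q d X c := by
      intro a
      rw [Ftree, ← Finset.mul_prod_erase T _ hc₀T]
      congr 1
      exact Finset.prod_congr rfl (hrest a)
    rw [Finset.sum_congr rfl fun a _ => hsplit a, ← Finset.sum_mul, sum_Fcons hu p' θ q d hqu,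
      Ftree, ← Finset.mul_prod_erase T _ hc₀T]
    ring
  · push_neg at hex
    have hconst : ∀ a : Φ.Q u,
        Ftree Φ p' θ q d (Function.update X u (PVal.val a)) T = Ftree Φ p' θ q d X T := by
      intro a
      exact Finset.prod_congr rfl fun c hc =>
        Fcons_update_of_notMem hu (hex c hc) p' θ q d a
    rw [Finset.sum_congr rfl fun a _ => hconst a, Finset.sum_const, Finset.card_univ, hqu,
      nsmul_eq_mul]

private lemma tree_unique {T : Finset Φ.C} (hT : IsTwoThreeTree Φ.depGraph T) (u : V) :
    ∀ c ∈ T, ∀ c' ∈ T, u ∈ Φ.vbl c → u ∈ Φ.vbl c' → c = c' := by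
  intro c hc c' hc' h1 h2
  by_contra hne
  have hadj : Φ.depGraph.Adj c c' := by
    rw [CSP.depGraph, SimpleGraph.fromRel_adj]
    exact ⟨hne, Or.inl ⟨u, Finset.mem_inter.mpr ⟨h1, h2⟩⟩⟩
  have h2le := hT.1 c hc c' hc' hne
  rw [← SimpleGraph.dist_eq_one_iff_adj] at hadj
  omega

private lemma sum_Fpot {X : Φ.PAssign} {u : V} (hu : X u = PVal.unacc)
    (p' θ : ℝ) (q d L L' : ℕ) (hqu : Fintype.card (Φ.Q u) = q) :
    ∑ a : Φ.Q u, Fpot Φ p' θ q d L L' (Function.update X u (PVal.val a))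
      = (q : ℝ) * Fpot Φ p' θ q d L L' X := by
  unfold Fpot
  rw [Finset.mul_sum, Finset.sum_comm]
  refine Finset.sum_congr rfl fun v _ => ?_
  rw [Finset.mul_sum, Finset.sum_comm]
  refine Finset.sum_congr rfl fun i _ => ?_
  rw [← Finset.mul_sum, Finset.sum_comm]
  have hT : ∀ T : Finset Φ.C,
      (∑ a : Φ.Q u,
        if IsTwoThreeTree Φ.depGraph T ∧ (∃ c ∈ T, v ∈ Φ.vbl c) ∧ T.card = i then
          Ftree Φ p' θ q d (Function.update X u (PVal.val a)) (T.filter fun c => v ∉ Φ.vbl c)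
        else 0)
      = (q : ℝ) *
        (if IsTwoThreeTree Φ.depGraph T ∧ (∃ c ∈ T, v ∈ Φ.vbl c) ∧ T.card = i then
          Ftree Φ p' θ q d X (T.filter fun c => v ∉ Φ.vbl c)
        else 0) := by
    intro T
    by_cases hcond : IsTwoThreeTree Φ.depGraph T ∧ (∃ c ∈ T, v ∈ Φ.vbl c) ∧ T.card = i
    · simp only [if_pos hcond]
      refine (sum_Ftree hu p' θ q d hqu _ ?_)
      intro c hc c' hc' h1 h2
      exact tree_unique hcond.1 u c (Finset.mem_of_mem_filter c hc) c'
        (Finset.mem_of_mem_filter c' hc') h1 h2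
    · simp only [if_neg hcond, Finset.sum_const, smul_zero, mul_zero]
  rw [Finset.sum_congr rfl fun T _ => hT T, ← Finset.mul_sum]
  ring

private lemma Fpot_update_star {X : Φ.PAssign} {u : V} (hu : X u = PVal.unacc)
    (p' θ : ℝ) (q d L L' : ℕ) :
    Fpot Φ p' θ q d L L' (Function.update X u PVal.star) = Fpot Φ p' θ q d L L' X := by
  have hcp : ∀ A : Set Φ.Assign,
      Φ.condProb A (Function.update X u PVal.star) = Φ.condProb A X := by
    intro A
    unfold CSP.condProb
    have hset : {x : Φ.Assign | Φ.agrees (Function.update X u PVal.star) x}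
        = {x : Φ.Assign | Φ.agrees X x} := Set.ext (agrees_update_star hu)
    rw [hset]
  unfold Fpot Ftree Fcons
  simp only [hcp]

end AuxProof


/-- **The potential averages correctly under assigning an unaccessed variable:**
`Σ_{a∈Q_u} F(X_{u←a}) = q·F(X)` and `Σ_{a∈Q_u∪{⋆}} F(X_{u←a}) = (q+1)·F(X)`. -/
theorem statement17 {V : Type} [Fintype V] [DecidableEq V] (Φ : CSP V)
    (q : ℕ) (hq : ∀ v, Fintype.card (Φ.Q v) = q)
    (p' : ℝ) (hp' : p' ∈ Set.Ioo (0 : ℝ) 1)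
    (θ : ℝ) (hθ : θ ∈ Set.Ioo (0 : ℝ) (1 / (q : ℝ)))
    (d : ℕ) (hd : 0 < d) (L L' : ℕ) (hL : L' ≤ L)
    (X : Φ.PAssign) (u : V) (hu : X u = PVal.unacc) :
    (∑ a : Φ.Q u, Fpot Φ p' θ q d L L' (Function.update X u (PVal.val a))
        = (q : ℝ) * Fpot Φ p' θ q d L L' X) ∧
    ((∑ a : Φ.Q u, Fpot Φ p' θ q d L L' (Function.update X u (PVal.val a)))
        + Fpot Φ p' θ q d L L' (Function.update X u PVal.star)
      = ((q : ℝ) + 1) * Fpot Φ p' θ q d L L' X) := by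
  have h1 := sum_Fpot hu p' θ q d L L' (hq u)
  refine ⟨h1, ?_⟩
  rw [h1, Fpot_update_star hu p' θ q d L L']
  ring
end

section
/- Let Φ = (V, 𝒬, 𝒞) be a CSP formula, p' ∈ (0,1) with e·p'·q·(Δ+1) < 1, and X a partial assignment with ℙ[¬c | X] ≤ p'·q for every c ∈ 𝒞. Let v ∈ V be a variable unassigned in X, and let p_rej denote the probability, under the uniform product distribution over the assignments of the unassigned variables occurring in the constraints of 𝒞^X_v, that all constraints in 𝒞^X_v are satisfied (with the variables of Λ(X) fixed to their values in X). Then p_rej ≥ (1 − e·p'·q)^{|𝒞^X_v|}. -/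
open Finset

/-!
The bound holds for every finite set of constraints, by the Lovász Local Lemma for the uniform
distribution on the assignments agreeing with `X`. Under this distribution a constraint `c` is
independent of the event that all constraints sharing no `X`-unassigned variable with `c` are
satisfied; the independence is a double counting, since exchanging the values on `vbl c` between
two assignments is an involution. Each constraint has at most `Δ` neighbours, and with the
weight `x = e·p'·q` for every constraint the local lemma's condition
`p'·q = x / e ≤ x (1 - x)^Δ` follows from `x (Δ + 1) < 1`, which gives `(1 - x)^Δ ≥ 1/e`.
-/

open Set

lemma exp_neg_one_le_one_sub_pow {ε : ℝ} {n : ℕ} (h : ε * (n + 1) < 1) :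
    Real.exp (-1) ≤ (1 - ε) ^ n := by
  have hn : (0 : ℝ) ≤ n := n.cast_nonneg
  have hpos : 0 < 1 - ε := by nlinarith
  rw [← Real.exp_log (pow_pos hpos n), Real.log_pow, Real.exp_le_exp]
  have hrw : (n : ℝ) * (1 - (1 - ε)⁻¹) = -(n * ε) / (1 - ε) := by
    field_simp
    ring
  calc -1 ≤ (n : ℝ) * (1 - (1 - ε)⁻¹) := by
        rw [hrw, le_div_iff₀ hpos]
        linarith
    _ ≤ n * Real.log (1 - ε) :=
        mul_le_mul_of_nonneg_left (Real.one_sub_inv_le_log_of_pos hpos) hn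

-- The map `(x, y) ↦ (s.piecewise x y, s.piecewise y x)` is an involution that carries
-- `(A ∩ Ω) × (B ∩ Ω)` onto `(A ∩ B ∩ Ω) × Ω`.
theorem ncard_inter_inter_mul_ncard_eq_of_dependsOn {ι : Type*} {β : ι → Type*}
    {s t : Set ι} [DecidablePred (· ∈ s)] {A B Ω : Set (Π i, β i)}
    (hA : DependsOn (· ∈ A) s) (hB : DependsOn (· ∈ B) t)
    (hΩ : ∀ x ∈ Ω, ∀ y ∈ Ω, s.piecewise x y ∈ Ω)
    (hst : ∀ x ∈ Ω, ∀ y ∈ Ω, ∀ i ∈ s ∩ t, x i = y i) :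
    (A ∩ B ∩ Ω).ncard * Ω.ncard = (A ∩ Ω).ncard * (B ∩ Ω).ncard := by
  set φ : (Π i, β i) × (Π i, β i) → (Π i, β i) × (Π i, β i) :=
    fun p => (s.piecewise p.1 p.2, s.piecewise p.2 p.1)
  have hφ : Function.Involutive φ := by
    rintro ⟨x, y⟩
    ext i <;> by_cases hi : i ∈ s <;> simp [φ, Set.piecewise, hi]
  have memA : ∀ x y, x ∈ A → s.piecewise x y ∈ A := fun x y hx =>
    (hA fun i hi => (s.piecewise_eq_of_mem x y hi).symm).mp hx
  have memB : ∀ x ∈ Ω, ∀ y ∈ Ω, y ∈ B → s.piecewise x y ∈ B := by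
    intro x hx y hy hyB
    refine (hB fun i hi => ?_).mp hyB
    by_cases his : i ∈ s
    · rw [s.piecewise_eq_of_mem x y his, hst x hx y hy i ⟨his, hi⟩]
    · rw [s.piecewise_eq_of_notMem x y his]
  have himage : φ '' ((A ∩ Ω) ×ˢ (B ∩ Ω)) = (A ∩ B ∩ Ω) ×ˢ Ω := by
    refine Subset.antisymm ?_ fun p hp => ⟨φ p, ?_, hφ p⟩
    · rintro _ ⟨⟨x, y⟩, ⟨⟨hxA, hx⟩, ⟨hyB, hy⟩⟩, rfl⟩
      exact ⟨⟨⟨memA x y hxA, memB x hx y hy hyB⟩, hΩ x hx y hy⟩, hΩ y hy x hx⟩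
    · obtain ⟨⟨⟨hzA, hzB⟩, hz⟩, hw⟩ := hp
      exact ⟨⟨memA _ _ hzA, hΩ _ hz _ hw⟩, ⟨memB _ hw _ hz hzB, hΩ _ hw _ hz⟩⟩
  rw [← ncard_prod, ← himage, ncard_image_of_injective _ hφ.injective, ncard_prod]

section LocalLemma

variable {α ι : Type*}

def avoidSet (A : ι → Set α) (S : Finset ι) : Set α := ⋂ i ∈ S, (A i)ᶜ

variable {A : ι → Set α} {Ω : Set α} {x : ℝ}

@[simp]
lemma avoidSet_empty : avoidSet A ∅ = univ := by
  simp [avoidSet]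

lemma avoidSet_anti {S T : Finset ι} (h : S ⊆ T) : avoidSet A T ⊆ avoidSet A S :=
  biInter_subset_biInter_left (by exact_mod_cast h)

lemma inter_avoidSet_eq_empty_of_mem {i : ι} {S : Finset ι} (hi : i ∈ S) :
    A i ∩ avoidSet A S = ∅ :=
  eq_empty_of_forall_notMem fun _ ⟨hy, hyS⟩ => mem_iInter₂.1 hyS i hi hy

variable [DecidableEq ι]

lemma avoidSet_insert (i : ι) (S : Finset ι) :
    avoidSet A (insert i S) = (A i)ᶜ ∩ avoidSet A S := by
  simp [avoidSet]

lemma ncard_avoidSet_inter_eq (hΩ : Ω.Finite) (i : ι) (S : Finset ι) :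
    (avoidSet A S ∩ Ω).ncard
      = (avoidSet A (insert i S) ∩ Ω).ncard + (A i ∩ avoidSet A S ∩ Ω).ncard := by
  rw [← ncard_union_eq _ (hΩ.subset inter_subset_right) (hΩ.subset inter_subset_right)]
  · congr 1
    ext y
    by_cases hy : y ∈ A i <;> simp [avoidSet_insert, hy]
  · rw [avoidSet_insert]
    exact disjoint_left.2 fun y hy hy' => hy.1.1 hy'.1.1

lemma one_sub_mul_le_ncard_avoidSet_insert (hΩ : Ω.Finite) {i : ι} {S : Finset ι}
    (h : ((A i ∩ avoidSet A S ∩ Ω).ncard : ℝ) ≤ x * (avoidSet A S ∩ Ω).ncard) :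
    (1 - x) * (avoidSet A S ∩ Ω).ncard ≤ (avoidSet A (insert i S) ∩ Ω).ncard := by
  have := ncard_avoidSet_inter_eq (A := A) hΩ i S
  rw [← Nat.cast_inj (R := ℝ), Nat.cast_add] at this
  linarith

lemma one_sub_pow_mul_le_ncard_avoidSet_union (hΩ : Ω.Finite) (hx : x ≤ 1)
    (S T : Finset ι)
    (h : ∀ i ∈ T, ∀ R ⊆ T, i ∉ R →
      ((A i ∩ avoidSet A (S ∪ R) ∩ Ω).ncard : ℝ) ≤ x * (avoidSet A (S ∪ R) ∩ Ω).ncard) :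
    (1 - x) ^ T.card * (avoidSet A S ∩ Ω).ncard ≤ (avoidSet A (S ∪ T) ∩ Ω).ncard := by
  induction T using Finset.induction_on with
  | empty => simp
  | insert i T hiT ih =>
    have hT := ih fun j hj R hR => h j (Finset.mem_insert_of_mem hj) R
      (hR.trans (Finset.subset_insert i T))
    have hstep := one_sub_mul_le_ncard_avoidSet_insert hΩ
      (h i (Finset.mem_insert_self i T) T (Finset.subset_insert i T) hiT)
    rw [Finset.card_insert_of_notMem hiT, Finset.union_insert, pow_succ', mul_assoc]
    exact (mul_le_mul_of_nonneg_left hT (sub_nonneg.2 hx)).trans hstep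

theorem ncard_inter_avoidSet_le {N : ι → Finset ι} {p : ℝ} {Δ : ℕ} (hΩ : Ω.Finite)
    (hA : ∀ i, ((A i ∩ Ω).ncard : ℝ) ≤ p * Ω.ncard)
    (hindep : ∀ i (S : Finset ι), i ∉ S → Disjoint S (N i) →
      (A i ∩ avoidSet A S ∩ Ω).ncard * Ω.ncard = (A i ∩ Ω).ncard * (avoidSet A S ∩ Ω).ncard)
    (hN : ∀ i, (N i).card ≤ Δ) (hx0 : 0 ≤ x) (hx1 : x ≤ 1) (hpx : p ≤ x * (1 - x) ^ Δ)
    (S : Finset ι) (i : ι) :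
    ((A i ∩ avoidSet A S ∩ Ω).ncard : ℝ) ≤ x * (avoidSet A S ∩ Ω).ncard := by
  induction S using Finset.strongInduction generalizing i with
  | H S ih =>
  by_cases hiS : i ∈ S
  · rw [inter_avoidSet_eq_empty_of_mem hiS, empty_inter, ncard_empty, Nat.cast_zero]
    positivity
  set S₁ := S.filter (· ∈ N i)
  set S₂ := S.filter (· ∉ N i)
  have hS : S₂ ∪ S₁ = S := by
    rw [Finset.union_comm]
    exact Finset.filter_union_filter_not_eq _ S
  have hchain : (1 - x) ^ S₁.card * ((avoidSet A S₂ ∩ Ω).ncard : ℝ)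
      ≤ (avoidSet A S ∩ Ω).ncard := by
    rw [← hS]
    refine one_sub_pow_mul_le_ncard_avoidSet_union hΩ hx1 S₂ S₁ fun j hj R hR hjR => ih _ ?_ j
    refine Finset.ssubset_iff_of_subset ?_ |>.2 ⟨j, (Finset.filter_subset _ S) hj, ?_⟩
    · rw [← hS]
      exact Finset.union_subset_union le_rfl hR
    · rw [Finset.mem_union, not_or]
      exact ⟨fun hj₂ => (Finset.mem_filter.1 hj₂).2 (Finset.mem_filter.1 hj).2, hjR⟩
  have hindep₂ := hindep i S₂ (fun h => hiS (Finset.filter_subset _ S h))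
    (Finset.disjoint_left.2 fun j hj => (Finset.mem_filter.1 hj).2)
  have hmono : ((A i ∩ avoidSet A S ∩ Ω).ncard : ℝ) ≤ (A i ∩ avoidSet A S₂ ∩ Ω).ncard := by
    refine Nat.cast_le.2 (ncard_le_ncard ?_ (hΩ.subset inter_subset_right))
    exact inter_subset_inter_left _
      (inter_subset_inter_right _ (avoidSet_anti (Finset.filter_subset _ S)))
  have hpow : (1 - x) ^ Δ ≤ (1 - x) ^ S₁.card :=
    pow_le_pow_of_le_one (sub_nonneg.2 hx1) (by linarith)
      ((Finset.card_le_card (fun j hj => (Finset.mem_filter.1 hj).2)).trans (hN i))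
  rcases (Nat.cast_nonneg (α := ℝ) Ω.ncard).eq_or_lt with hΩ0 | hΩ0
  · have := (ncard_eq_zero hΩ).1 (by exact_mod_cast hΩ0.symm)
    simp [this]
  have ha₂ : (0 : ℝ) ≤ (avoidSet A S₂ ∩ Ω).ncard := Nat.cast_nonneg _
  refine le_of_mul_le_mul_right ?_ hΩ0
  calc ((A i ∩ avoidSet A S ∩ Ω).ncard : ℝ) * Ω.ncard
      ≤ (A i ∩ avoidSet A S₂ ∩ Ω).ncard * Ω.ncard := by gcongr
    _ = (A i ∩ Ω).ncard * (avoidSet A S₂ ∩ Ω).ncard := by exact_mod_cast hindep₂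
    _ ≤ x * (1 - x) ^ Δ * Ω.ncard * (avoidSet A S₂ ∩ Ω).ncard := by
        gcongr
        exact (hA i).trans (by gcongr)
    _ ≤ x * ((1 - x) ^ S₁.card * (avoidSet A S₂ ∩ Ω).ncard) * Ω.ncard := by
        rw [mul_right_comm _ (Ω.ncard : ℝ), mul_assoc x]
        gcongr
    _ ≤ x * (avoidSet A S ∩ Ω).ncard * Ω.ncard := by gcongr

theorem lovasz_local_lemma {N : ι → Finset ι} {p : ℝ} {Δ : ℕ} (hΩ : Ω.Finite)
    (hA : ∀ i, ((A i ∩ Ω).ncard : ℝ) ≤ p * Ω.ncard)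
    (hindep : ∀ i (S : Finset ι), i ∉ S → Disjoint S (N i) →
      (A i ∩ avoidSet A S ∩ Ω).ncard * Ω.ncard = (A i ∩ Ω).ncard * (avoidSet A S ∩ Ω).ncard)
    (hN : ∀ i, (N i).card ≤ Δ) (hx0 : 0 ≤ x) (hx1 : x ≤ 1) (hpx : p ≤ x * (1 - x) ^ Δ)
    (S : Finset ι) :
    (1 - x) ^ S.card * (Ω.ncard : ℝ) ≤ (avoidSet A S ∩ Ω).ncard := by
  simpa using one_sub_pow_mul_le_ncard_avoidSet_union hΩ hx1 ∅ S fun i _ R _ _ =>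
    ncard_inter_avoidSet_le hΩ hA hindep hN hx0 hx1 hpx _ i

end LocalLemma

namespace CSP

variable {V : Type} [Fintype V] [DecidableEq V] (Φ : CSP V)

open Classical in
/-- The neighbours of `c` in the dependency graph of `Φ` simplified under `X`. -/
noncomputable def linked (X : Φ.PAssign) (c : Φ.C) : Finset Φ.C :=
  {c' | c' ≠ c ∧ ∃ w ∈ Φ.vbl c ∩ Φ.vbl c', ¬ Φ.assigned X w}

lemma card_linked_le_degree (X : Φ.PAssign) (c : Φ.C) : (Φ.linked X c).card ≤ Φ.degree := by
  classical
  refine (Finset.card_le_card fun c' hc' => ?_).trans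
    (Finset.le_sup (f := fun c => (Finset.univ.filter fun c' : Φ.C =>
      c' ≠ c ∧ ((Φ.vbl c) ∩ (Φ.vbl c')).Nonempty).card) (Finset.mem_univ c))
  obtain ⟨hne, w, hw, -⟩ := (Finset.mem_filter.1 hc').2
  exact Finset.mem_filter.2 ⟨Finset.mem_univ _, hne, w, hw⟩

lemma exists_agrees (X : Φ.PAssign) : ∃ x, Φ.agrees X x := by
  have : ∀ v, Nonempty (Φ.Q v) := fun v => Fintype.card_pos_iff.1 (by linarith [Φ.card_two v])
  refine ⟨fun v => match X v with
    | .val a => a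
    | _ => Classical.arbitrary _, fun v a ha => ?_⟩
  simp only [ha]

lemma agrees_piecewise {X : Φ.PAssign} {x y : Φ.Assign} (s : Set V) [DecidablePred (· ∈ s)]
    (hx : Φ.agrees X x) (hy : Φ.agrees X y) : Φ.agrees X (s.piecewise x y) := by
  intro v a ha
  by_cases hv : v ∈ s
  · rw [s.piecewise_eq_of_mem x y hv, hx v a ha]
  · rw [s.piecewise_eq_of_notMem x y hv, hy v a ha]

lemma dependsOn_mem_viol (c : Φ.C) : DependsOn (· ∈ Φ.viol c) (Φ.vbl c : Set V) :=
  fun x y h => propext <| not_congr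
    ⟨Φ.sat_local c x y h, Φ.sat_local c y x fun v hv => (h v hv).symm⟩

lemma dependsOn_mem_avoidSet_viol (S : Finset Φ.C) :
    DependsOn (· ∈ avoidSet Φ.viol S) (⋃ c ∈ S, (Φ.vbl c : Set V)) := by
  intro x y h
  simp only [avoidSet, mem_iInter, mem_compl_iff]
  exact propext <| forall₂_congr fun c hc =>
    not_congr (Φ.dependsOn_mem_viol c fun v hv => h v (mem_biUnion hc hv)).to_iff

lemma ncard_viol_inter_avoidSet_mul_ncard_eq (X : Φ.PAssign) (c : Φ.C) (S : Finset Φ.C)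
    (hc : c ∉ S) (hS : Disjoint S (Φ.linked X c)) :
    (Φ.viol c ∩ avoidSet Φ.viol S ∩ {x | Φ.agrees X x}).ncard * {x | Φ.agrees X x}.ncard
      = (Φ.viol c ∩ {x | Φ.agrees X x}).ncard
        * (avoidSet Φ.viol S ∩ {x | Φ.agrees X x}).ncard := by
  classical
  refine ncard_inter_inter_mul_ncard_eq_of_dependsOn (Φ.dependsOn_mem_viol c)
    (Φ.dependsOn_mem_avoidSet_viol S) (fun x hx y hy => Φ.agrees_piecewise _ hx hy) ?_
  rintro x hx y hy v ⟨hvc, hvS⟩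
  obtain ⟨c', hc'S, hvc'⟩ := mem_iUnion₂.1 hvS
  have hc' : c' ∉ Φ.linked X c := Finset.disjoint_left.1 hS hc'S
  have hassigned : Φ.assigned X v := by
    by_contra hv
    refine hc' (Finset.mem_filter.2 ⟨Finset.mem_univ _, ?_, v, ?_, hv⟩)
    · rintro rfl
      exact hc hc'S
    · exact Finset.mem_inter.2 ⟨hvc, hvc'⟩
  obtain ⟨a, ha⟩ := hassigned
  rw [hx v a ha, hy v a ha]

end CSP

theorem statement19_general {V : Type} [Fintype V] [DecidableEq V] (Φ : CSP V)
    (p' : ℝ) (hp' : p' ∈ Set.Ioo (0 : ℝ) 1)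
    (hlll : Real.exp 1 * p' * (Φ.qmax : ℝ) * ((Φ.degree : ℝ) + 1) < 1)
    (X : Φ.PAssign) (hcond : ∀ c, Φ.condProb (Φ.viol c) X ≤ p' * (Φ.qmax : ℝ))
    (v : V) :
    (1 - Real.exp 1 * p' * (Φ.qmax : ℝ)) ^ ((Φ.CompCons X v).ncard)
      ≤ Φ.condProb {x : Φ.Assign | ∀ c ∈ Φ.CompCons X v, Φ.sat c x} X := by
  set ε := Real.exp 1 * p' * Φ.qmax
  have hΩ : (0 : ℝ) < {x | Φ.agrees X x}.ncard := by
    exact_mod_cast (ncard_pos (toFinite _)).2 (Φ.exists_agrees X)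
  have hε0 : 0 ≤ ε := by have := hp'.1; positivity
  have hpx : p' * Φ.qmax ≤ ε * (1 - ε) ^ Φ.degree := by
    calc p' * Φ.qmax = ε * Real.exp (-1) := by
          simp only [ε, Real.exp_neg]
          field_simp
      _ ≤ ε * (1 - ε) ^ Φ.degree :=
          mul_le_mul_of_nonneg_left (exp_neg_one_le_one_sub_pow hlll) hε0
  have hS : {x : Φ.Assign | ∀ c ∈ Φ.CompCons X v, Φ.sat c x}
      = avoidSet Φ.viol (toFinite (Φ.CompCons X v)).toFinset := by
    ext x
    simp [avoidSet, CSP.viol]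
  rw [CSP.condProb, le_div_iff₀ hΩ, hS, ncard_eq_toFinset_card _ (toFinite _)]
  exact lovasz_local_lemma (toFinite _) (fun c => (div_le_iff₀ hΩ).1 (hcond c))
    (Φ.ncard_viol_inter_avoidSet_mul_ncard_eq X) (Φ.card_linked_le_degree X) hε0
    (by nlinarith) hpx _

/-- **Efficiency of rejection sampling on one component.**
If `e·p'·q·(Δ+1) < 1` and `ℙ[¬c | X] ≤ p'·q` for all constraints `c`, then for any
variable `v` unassigned in `X`, the probability (under the uniform product distribution
conditioned on `X`) that all constraints of the component `𝒞^X_v` are satisfied is at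
least `(1 − e·p'·q)^{|𝒞^X_v|}`. -/
theorem statement19 {V : Type} [Fintype V] [DecidableEq V] (Φ : CSP V)
    (p' : ℝ) (hp' : p' ∈ Set.Ioo (0 : ℝ) 1)
    (hlll : Real.exp 1 * p' * (Φ.qmax : ℝ) * ((Φ.degree : ℝ) + 1) < 1)
    (X : Φ.PAssign) (hcond : ∀ c, Φ.condProb (Φ.viol c) X ≤ p' * (Φ.qmax : ℝ))
    (v : V) (hv : ¬ Φ.assigned X v) :
    (1 - Real.exp 1 * p' * (Φ.qmax : ℝ)) ^ ((Φ.CompCons X v).ncard)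
      ≤ Φ.condProb {x : Φ.Assign | ∀ c ∈ Φ.CompCons X v, Φ.sat c x} X :=
  statement19_general Φ p' hp' hlll X hcond v
end
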